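/- arXiv:2102.11226 — 11 statements merged into one kernel-verified Lean document; each statement's English description precedes it below -/
import Mathlib

section
/- Let X be a normed plane (two-dimensional real normed space) with unit sphere S_X, let x ∈ S_X, and let γ_x : ℝ → S_X be the arc-length (natural) parameterization of S_X with γ_x(0) = x. If y is a one-sided derivative of γ_x at 0 (i.e., y = lim_{t→0+} (γ_x(t) − x)/t or the corresponding left limit), then x is Birkhoff orthogonal to y, that is, ‖x + λy‖ ≥ ‖x‖ for every λ ∈ ℝ. -/
/-! Along a curve staying on the sphere of radius `‖x‖`, the point `x + l • (t⁻¹ • (γ t - x))`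
lies on the line through `x` and `γ t`, outside the segment between them once `|t| < |l|`.
Such points have norm at least `‖x‖` by the triangle inequality, and letting `t → 0` gives
`‖x + l • y‖ ≥ ‖x‖`. -/

open Filter Topology

lemma norm_le_norm_add_smul_sub {X : Type*} [SeminormedAddCommGroup X] [NormedSpace ℝ X]
    {x z : X} (hz : ‖z‖ = ‖x‖) {s : ℝ} (hs : 1 ≤ |s|) :
    ‖x‖ ≤ ‖x + s • (z - x)‖ := by
  have hline : x + s • (z - x) = s • z - (s - 1) • x := by
    rw [smul_sub, sub_smul, one_smul]; abel
  have hcoef : |(|s| - |s - 1|)| = 1 := by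
    rcases le_abs'.mp hs with hs | hs
    · rw [abs_of_neg (by linarith : s < 0), abs_of_neg (by linarith : s - 1 < 0),
        show -s - -(s - 1) = -1 by ring]
      norm_num
    · rw [abs_of_pos (by linarith : 0 < s), abs_of_nonneg (by linarith : 0 ≤ s - 1)]; norm_num
  calc ‖x‖ = |(‖s • z‖ - ‖(s - 1) • x‖)| := by
        rw [norm_smul, norm_smul, hz, Real.norm_eq_abs, Real.norm_eq_abs, ← sub_mul, abs_mul,
          hcoef, abs_norm, one_mul]
    _ ≤ ‖s • z - (s - 1) • x‖ := abs_norm_sub_norm_le _ _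
    _ = ‖x + s • (z - x)‖ := by rw [hline]

lemma norm_le_norm_add_smul_of_tendsto_slope {X : Type*} [SeminormedAddCommGroup X]
    [NormedSpace ℝ X] {x y : X} {γ : ℝ → X} (hγ : ∀ t, ‖γ t‖ = ‖x‖)
    {F : Filter ℝ} [F.NeBot] (hF : F ≤ 𝓝[≠] 0)
    (hy : Tendsto (fun t : ℝ => t⁻¹ • (γ t - x)) F (𝓝 y)) (l : ℝ) :
    ‖x‖ ≤ ‖x + l • y‖ := by
  rcases eq_or_ne l 0 with rfl | hl
  · simp
  have hlim : Tendsto (fun t : ℝ => ‖x + l • (t⁻¹ • (γ t - x))‖) F (𝓝 ‖x + l • y‖) :=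
    ((hy.const_smul l).const_add x).norm
  have hne : ∀ᶠ t in F, t ≠ 0 := hF self_mem_nhdsWithin
  have hsmall : ∀ᶠ t in F, |t| < |l| :=
    hF.trans nhdsWithin_le_nhds <|
      (isOpen_lt continuous_abs continuous_const).mem_nhds (by simpa using hl)
  refine ge_of_tendsto hlim ?_
  filter_upwards [hne, hsmall] with t ht hlt
  rw [smul_smul]
  refine norm_le_norm_add_smul_sub (hγ t) ?_
  rw [abs_mul, abs_inv, ← div_eq_mul_inv]
  exact (one_le_div (abs_pos.mpr ht)).mpr hlt.le

theorem stmt0_general {X : Type*} [NormedAddCommGroup X] [NormedSpace ℝ X]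
    (x y : X) (hx : ‖x‖ = 1)
    (γ : ℝ → X) (hγsph : ∀ t, ‖γ t‖ = 1)
    (hy : Filter.Tendsto (fun t : ℝ => t⁻¹ • (γ t - x)) (nhdsWithin 0 (Set.Ioi 0)) (nhds y) ∨
          Filter.Tendsto (fun t : ℝ => t⁻¹ • (γ t - x)) (nhdsWithin 0 (Set.Iio 0)) (nhds y)) :
    ∀ l : ℝ, ‖x + l • y‖ ≥ ‖x‖ := by
  have hγ : ∀ t, ‖γ t‖ = ‖x‖ := fun t => (hγsph t).trans hx.symm
  rcases hy with hy | hy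
  · exact norm_le_norm_add_smul_of_tendsto_slope hγ (nhdsGT_le_nhdsNE 0) hy
  · exact norm_le_norm_add_smul_of_tendsto_slope hγ (nhdsLT_le_nhdsNE 0) hy

/-- Lemma of J. Alonso. Let `X` be a two-dimensional real normed
space, `x` a point of its unit sphere, and `γ` the natural (arc-length) parameterization
of the unit sphere with `γ 0 = x`. If `y` is a one-sided derivative of `γ` at `0`
(a right or a left limit of the difference quotients), then `x` is Birkhoff orthogonal
to `y`, i.e. `‖x + λ • y‖ ≥ ‖x‖` for every `λ : ℝ`. -/
theorem stmt0 {X : Type*} [NormedAddCommGroup X] [NormedSpace ℝ X]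
    (hdim : Module.finrank ℝ X = 2)
    (x y : X) (hx : ‖x‖ = 1)
    (γ : ℝ → X) (hγsph : ∀ t, ‖γ t‖ = 1) (hγ0 : γ 0 = x)
    (hy : Filter.Tendsto (fun t : ℝ => t⁻¹ • (γ t - x)) (nhdsWithin 0 (Set.Ioi 0)) (nhds y) ∨
          Filter.Tendsto (fun t : ℝ => t⁻¹ • (γ t - x)) (nhdsWithin 0 (Set.Iio 0)) (nhds y)) :
    ∀ l : ℝ, ‖x + l • y‖ ≥ ‖x‖ :=
  stmt0_general x y hx γ hγsph hy
end

section
/- Let X be a finite-dimensional normed space and x ∈ S_X. The norm ‖·‖ fails to be (Gâteaux) differentiable at x if and only if there exist δ, ε₀ > 0 such that for every ε with 0 < ε < ε₀ there exist u, v ∈ S_X \ {x, −x} satisfying max{‖u − x‖, ‖v + x‖} ≤ ε and ‖u − v‖ ≤ 2 − δε. -/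
/-!
Along a line through `x` the function `t ↦ ‖x + t • y‖` is convex, so it has one-sided derivatives
at `0` and its graph lies above the two half-lines from `(0, ‖x‖)` with these slopes. If the
one-sided derivatives agree in every direction, a norming functional `f` of `x` is the derivative
along every line, and since the norm is Lipschitz and the unit sphere is compact this makes `f` a
Fréchet derivative. Otherwise some unit direction `y` has a kink: `1 + t α ≤ ‖x + t • y‖` and
`1 + t β ≤ ‖x - t • y‖` for all `t > 0`, with `α + β > 0`. Normalizing `x + t • y` and
`-(x - t • y)` then gives unit vectors `u, v` within `2 t` of `x, -x` with
`‖u - v‖ ≤ 2 - t (α + β) + 8 t²`. Conversely, if `f` is the derivative of the norm at `x`, then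
`f u` and `f (-v)` are `1 - o(ε)`, so `‖u - v‖ ≥ f (u - v) ≥ 2 - o(ε)`.
-/

open Set Filter Topology NormedSpace

namespace ConvexOn

variable {g : ℝ → ℝ} {x : ℝ}

theorem exists_supporting_slopes_of_not_differentiableAt (hg : ConvexOn ℝ univ g)
    (hd : ¬DifferentiableAt ℝ g x) :
    ∃ α β : ℝ, 0 < α + β ∧ ∀ t > 0, g x + t * α ≤ g (x + t) ∧ g x + t * β ≤ g (x - t) := by
  have hx : x ∈ interior univ := by simp
  have hr := hg.hasDerivWithinAt_rightDeriv_of_mem_interior hx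
  have hl := hg.hasDerivWithinAt_leftDeriv_of_mem_interior hx
  refine ⟨derivWithin g (Ioi x) x, -derivWithin g (Iio x) x, ?_, fun t ht => ⟨?_, ?_⟩⟩
  · by_contra! hrl
    have hlr := le_antisymm (hg.leftDeriv_le_rightDeriv_of_mem_interior hx) (by linarith)
    rw [hlr] at hl
    have hboth := (hasDerivWithinAt_Iio_iff_Iic.1 hl).union (hasDerivWithinAt_Ioi_iff_Ici.1 hr)
    rw [Iic_union_Ici, hasDerivWithinAt_univ] at hboth
    exact hd hboth.differentiableAt
  · have := hg.le_slope_of_hasDerivWithinAt_Ioi (mem_univ x) (mem_univ (x + t)) (by linarith) hr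
    rw [slope_def_field, add_sub_cancel_left, le_div_iff₀ ht] at this
    linarith
  · have := hg.slope_le_of_hasDerivWithinAt_Iio (mem_univ (x - t)) (mem_univ x) (by linarith) hl
    rw [slope_def_field, sub_sub_cancel, div_le_iff₀ ht] at this
    linarith

end ConvexOn

section

variable {E : Type*} [NormedAddCommGroup E] [NormedSpace ℝ E]

theorem StrongDual.apply_le_norm {f : StrongDual ℝ E} (hf : ‖f‖ ≤ 1) (w : E) : f w ≤ ‖w‖ :=
  (le_abs_self _).trans ((f.le_of_opNorm_le hf w).trans_eq (one_mul _))

theorem convexOn_norm_add_smul (x y : E) : ConvexOn ℝ univ fun t : ℝ => ‖x + t • y‖ := by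
  have := (convexOn_norm (E := E) convex_univ).comp_affineMap (AffineMap.lineMap x (x + y))
  simpa [Function.comp_def, AffineMap.lineMap_apply, add_comm] using this

theorem hasLineDerivAt_norm_of_differentiableAt {x v : E} {f : StrongDual ℝ E} (hf : ‖f‖ ≤ 1)
    (hfx : f x = ‖x‖) (hd : DifferentiableAt ℝ (fun t : ℝ => ‖x + t • v‖) 0) :
    HasLineDerivAt ℝ (‖·‖) (f v) x v := by
  have hmin : IsLocalMin (fun t : ℝ => ‖x + t • v‖ - t * f v) 0 := by
    refine Eventually.of_forall fun t => ?_
    have := StrongDual.apply_le_norm hf (x + t • v)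
    simp only [map_add, map_smul, hfx, smul_eq_mul] at this
    simp only [zero_smul, add_zero, zero_mul, sub_zero]
    linarith
  have hderiv : deriv (fun t : ℝ => ‖x + t • v‖) 0 = f v :=
    sub_eq_zero.1 (hmin.hasDerivAt_eq_zero (hd.hasDerivAt.sub (hasDerivAt_mul_const (f v))))
  exact hderiv ▸ hd.hasDerivAt

theorem exists_supporting_slopes_of_not_differentiableAt_norm [FiniteDimensional ℝ E] {x : E}
    (hx : x ≠ 0) (hd : ¬DifferentiableAt ℝ (‖·‖) x) :
    ∃ y : E, ‖y‖ = 1 ∧ ∃ α β : ℝ, 0 < α + β ∧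
      (∀ t > 0, ‖x‖ + t * α ≤ ‖x + t • y‖) ∧ ∀ t > 0, ‖x‖ + t * β ≤ ‖x - t • y‖ := by
  by_contra! H
  obtain ⟨f, hf, hfx⟩ := exists_dual_vector ℝ x (norm_ne_zero_iff.2 hx)
  refine hd (lipschitzWith_one_norm.hasFDerivAt_of_hasLineDerivAt_of_closure subset_closure
    fun v hv => hasLineDerivAt_norm_of_differentiableAt hf.le hfx ?_).differentiableAt
  by_contra hvd
  obtain ⟨α, β, hαβ, hbounds⟩ :=
    (convexOn_norm_add_smul x v).exists_supporting_slopes_of_not_differentiableAt hvd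
  obtain ⟨t, ht, hlt⟩ := H v (mem_sphere_zero_iff_norm.1 hv) α β hαβ
    fun t ht => by simpa using (hbounds t ht).1
  have := (hbounds t ht).2
  simp only [zero_sub, neg_smul, zero_smul, add_zero, ← sub_eq_add_neg] at this
  exact hlt.not_ge this

theorem norm_normalize_sub_le {x : E} (hx : ‖x‖ = 1) (w : E) :
    ‖normalize w - x‖ ≤ 2 * ‖w - x‖ := by
  rcases eq_or_ne w 0 with rfl | hw
  · simp [hx]
  have hw' : ‖w‖ ≠ 0 := norm_ne_zero_iff.2 hw
  have hnw : ‖normalize w - w‖ = |‖x‖ - ‖w‖| := by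
    rw [NormedSpace.normalize, show ‖w‖⁻¹ • w - w = (‖w‖⁻¹ - 1) • w by module, norm_smul,
      Real.norm_eq_abs, ← abs_norm w, ← abs_mul, abs_norm, sub_mul, inv_mul_cancel₀ hw', one_mul,
      hx]
  calc ‖normalize w - x‖ ≤ ‖normalize w - w‖ + ‖w - x‖ := norm_sub_le_norm_sub_add_norm_sub _ _ _
    _ ≤ ‖x - w‖ + ‖w - x‖ := by rw [hnw]; gcongr; exact abs_norm_sub_norm_le x w
    _ = 2 * ‖w - x‖ := by rw [norm_sub_rev]; ring

theorem ne_smul_of_supporting_slopes {x y : E} {α β : ℝ} (hx : ‖x‖ = 1) (hy : ‖y‖ = 1)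
    (hαβ : 0 < α + β) (hα : ∀ t > 0, 1 + t * α ≤ ‖x + t • y‖)
    (hβ : ∀ t > 0, 1 + t * β ≤ ‖x - t • y‖) (c : ℝ) : y ≠ c • x := by
  rintro rfl
  rw [norm_smul, hx, mul_one, Real.norm_eq_abs] at hy
  have hc := abs_le.1 hy.le
  have h₁ := hα (1 / 2) (by norm_num)
  have h₂ := hβ (1 / 2) (by norm_num)
  have e₁ : x + (1 / 2 : ℝ) • c • x = (1 + c / 2) • x := by module
  have e₂ : x - (1 / 2 : ℝ) • c • x = (1 - c / 2) • x := by module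
  rw [e₁, norm_smul, hx, mul_one, Real.norm_eq_abs, abs_of_nonneg (by linarith)] at h₁
  rw [e₂, norm_smul, hx, mul_one, Real.norm_eq_abs, abs_of_nonneg (by linarith)] at h₂
  linarith

theorem inv_add_mul_abs_inv_sub_one_le {a t α : ℝ} (ht : 0 < t) (ht2 : t ≤ 1 / 2)
    (hα : -1 ≤ α) (ha : 1 + t * α ≤ a) (ha1 : |a - 1| ≤ t) :
    a⁻¹ + t * |a⁻¹ - 1| ≤ 1 - t * α + 4 * t ^ 2 := by
  obtain ⟨ha1l, ha1u⟩ := abs_le.1 ha1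
  have hα1 : α ≤ 1 := by nlinarith
  have hs : 0 < 1 + t * α := by nlinarith
  have ha0 : 0 < a := by linarith
  have hinv : a⁻¹ ≤ 1 - t * α + 2 * t ^ 2 := by
    rw [inv_le_iff_one_le_mul₀ ha0]
    nlinarith [mul_nonneg (mul_nonneg ht.le ht.le) (sq_nonneg α)]
  have hdiff : |a⁻¹ - 1| ≤ 2 * t := by
    rw [show a⁻¹ - 1 = (1 - a) / a by field_simp, abs_div, abs_of_pos ha0, div_le_iff₀ ha0,
      abs_sub_comm]
    nlinarith
  nlinarith

theorem norm_normalize_add_normalize_sub_le {x y : E} {t α β : ℝ} (hx : ‖x‖ = 1) (hy : ‖y‖ = 1)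
    (ht : 0 < t) (ht2 : t ≤ 1 / 2) (hα : -1 ≤ α) (hβ : -1 ≤ β)
    (hα' : 1 + t * α ≤ ‖x + t • y‖) (hβ' : 1 + t * β ≤ ‖x - t • y‖) :
    ‖normalize (x + t • y) + normalize (x - t • y)‖ ≤ 2 - t * (α + β) + 8 * t ^ 2 := by
  have hty : ‖t • y‖ = t := by rw [norm_smul, hy, mul_one, Real.norm_eq_abs, abs_of_pos ht]
  have ha := inv_add_mul_abs_inv_sub_one_le ht ht2 hα hα' <| by
    simpa [hx, hty] using abs_norm_sub_norm_le (x + t • y) x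
  have hb := inv_add_mul_abs_inv_sub_one_le ht ht2 hβ hβ' <| by
    simpa [hx, hty] using abs_norm_sub_norm_le (x - t • y) x
  set a := ‖x + t • y‖
  set b := ‖x - t • y‖
  have hsum : normalize (x + t • y) + normalize (x - t • y)
      = (a⁻¹ + b⁻¹) • x + (t * (a⁻¹ - b⁻¹)) • y := by
    simp only [NormedSpace.normalize, a, b]
    module
  have hpos : 0 ≤ a⁻¹ + b⁻¹ := by positivity
  calc ‖normalize (x + t • y) + normalize (x - t • y)‖
      ≤ (a⁻¹ + b⁻¹) + t * |a⁻¹ - b⁻¹| := by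
        rw [hsum]
        refine (norm_add_le _ _).trans_eq ?_
        rw [norm_smul, norm_smul, hx, hy, Real.norm_eq_abs, Real.norm_eq_abs, abs_mul,
          abs_of_nonneg hpos, abs_of_pos ht, mul_one, mul_one]
    _ ≤ (a⁻¹ + t * |a⁻¹ - 1|) + (b⁻¹ + t * |b⁻¹ - 1|) := by
        have := abs_sub_le a⁻¹ 1 b⁻¹
        rw [abs_sub_comm 1] at this
        nlinarith
    _ ≤ 2 - t * (α + β) + 8 * t ^ 2 := by linarith

theorem add_smul_ne_smul {x y : E} (hpar : ∀ c : ℝ, y ≠ c • x) {t : ℝ} (ht : t ≠ 0) (c : ℝ) :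
    x + t • y ≠ c • x := by
  intro h
  apply hpar (t⁻¹ * (c - 1))
  rw [mul_smul, sub_smul, one_smul, ← h, add_sub_cancel_left, smul_smul, inv_mul_cancel₀ ht,
    one_smul]

theorem exists_near_antipodal_of_supporting_slopes {x y : E} {α β : ℝ} (hx : ‖x‖ = 1)
    (hy : ‖y‖ = 1) (hαβ : 0 < α + β) (hα : ∀ t > 0, 1 + t * α ≤ ‖x + t • y‖)
    (hβ : ∀ t > 0, 1 + t * β ≤ ‖x - t • y‖) :
    ∃ δ > (0:ℝ), ∃ ε₀ > (0:ℝ), ∀ ε : ℝ, 0 < ε → ε < ε₀ →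
      ∃ u v : E, ‖u‖ = 1 ∧ ‖v‖ = 1 ∧ u ≠ x ∧ u ≠ -x ∧ v ≠ x ∧ v ≠ -x ∧
        max ‖u - x‖ ‖v + x‖ ≤ ε ∧ ‖u - v‖ ≤ 2 - δ * ε := by
  have hα1 : α ≤ 1 := by
    have := hα 1 one_pos
    rw [one_smul, one_mul] at this
    linarith [norm_add_le x y]
  have hβ1 : β ≤ 1 := by
    have := hβ 1 one_pos
    rw [one_smul, one_mul] at this
    linarith [norm_sub_le x y]
  have hpar := ne_smul_of_supporting_slopes hx hy hαβ hα hβ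
  refine ⟨(α + β) / 4, by positivity, (α + β) / 8, by positivity, fun ε hε hεε₀ => ?_⟩
  obtain ⟨t, rfl⟩ : ∃ t, ε = 2 * t := ⟨ε / 2, by ring⟩
  have ht : 0 < t := by linarith
  have hty : ‖t • y‖ = t := by rw [norm_smul, hy, mul_one, Real.norm_eq_abs, abs_of_pos ht]
  have hsub : x - t • y = x + (-t) • y := by rw [neg_smul, sub_eq_add_neg]
  have hu : ‖normalize (x + t • y) - x‖ ≤ 2 * t := by
    simpa [hty] using norm_normalize_sub_le hx (x + t • y)
  have hv : ‖-normalize (x - t • y) + x‖ ≤ 2 * t := by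
    rw [neg_add_eq_sub, norm_sub_rev]
    simpa [hty] using norm_normalize_sub_le hx (x - t • y)
  have hxx : ‖x + x‖ = 2 := by rw [← two_smul ℝ, norm_smul, hx]; norm_num
  refine ⟨normalize (x + t • y), -normalize (x - t • y), ?_, ?_, ?_, ?_, ?_, ?_,
    max_le hu hv, ?_⟩
  · exact norm_normalize_eq_one_iff.2 (by simpa using add_smul_ne_smul hpar ht.ne' 0)
  · rw [norm_neg, hsub]
    exact norm_normalize_eq_one_iff.2 <| by
      simpa using add_smul_ne_smul hpar (neg_ne_zero.2 ht.ne') 0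
  · intro h
    refine add_smul_ne_smul hpar ht.ne' ‖x + t • y‖ ?_
    conv_lhs => rw [← norm_smul_normalize (x + t • y), h]
  · intro h
    rw [h, ← neg_add', norm_neg, hxx] at hu
    linarith
  · intro h
    rw [h, hxx] at hv
    linarith
  · intro h
    rw [neg_inj, hsub] at h
    refine add_smul_ne_smul hpar (neg_ne_zero.2 ht.ne') ‖x + (-t) • y‖ ?_
    conv_lhs => rw [← norm_smul_normalize (x + (-t) • y), h]
  · -- with `ε = 2 t`, the error `8 t²` is at most `t (α + β) / 2` because `ε < (α + β) / 8`
    rw [sub_neg_eq_add]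
    refine (norm_normalize_add_normalize_sub_le hx hy ht (by linarith) (by linarith) (by linarith)
      (hα t ht) (hβ t ht)).trans ?_
    nlinarith [mul_lt_mul_of_pos_left hεε₀ ht]

theorem eventually_lt_norm_sub_of_differentiableAt_norm {x : E} (hx : ‖x‖ = 1)
    (hd : DifferentiableAt ℝ (‖·‖) x) {δ : ℝ} (hδ : 0 < δ) :
    ∀ᶠ ε in 𝓝[>] 0, ∀ u v : E, ‖u‖ = 1 → ‖v‖ = 1 → max ‖u - x‖ ‖v + x‖ ≤ ε →
      2 - δ * ε < ‖u - v‖ := by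
  obtain ⟨f, hfd⟩ := hd
  have hfx : f x = 1 := hx ▸ hfd.fderiv ▸ hfd.differentiableAt.fderiv_norm_self
  have hf : ‖f‖ ≤ 1 := by
    simpa [hfd.fderiv] using norm_fderiv_le_of_lipschitz ℝ lipschitzWith_one_norm (x₀ := x)
  obtain ⟨r, hr, hlo⟩ :=
    Metric.eventually_nhds_iff.1 (hfd.isLittleO.def (by positivity : 0 < δ / 4))
  have key : ∀ w : E, ‖w‖ = 1 → ‖w - x‖ < r → 1 - δ / 4 * ‖w - x‖ ≤ f w := by
    intro w hw hwr
    have := hlo (by rwa [dist_eq_norm])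
    rw [hw, hx, map_sub, hfx, sub_self, zero_sub, norm_neg, Real.norm_eq_abs] at this
    linarith [neg_abs_le (f w - 1)]
  filter_upwards [Ioo_mem_nhdsGT hr] with ε ⟨hε, hεr⟩ u v hu hv huv
  have hux := (le_max_left _ _).trans huv
  have hvx := (le_max_right _ _).trans huv
  have h₁ := key u hu (hux.trans_lt hεr)
  have h₂ := key (-v) (by rwa [norm_neg]) (by rw [← neg_add', norm_neg]; exact hvx.trans_lt hεr)
  rw [← neg_add', norm_neg] at h₂
  calc 2 - δ * ε < f u + f (-v) := by nlinarith
    _ = f (u - v) := by rw [map_neg, map_sub, sub_eq_add_neg]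
    _ ≤ ‖u - v‖ := StrongDual.apply_le_norm hf _

end

/-- Proposition: local metric characterization of non-differentiability.
Let `X` be a finite-dimensional real normed space and `x` a point of the unit sphere.
The norm fails to be differentiable at `x` iff there exist `δ, ε₀ > 0` such that for
every `ε` with `0 < ε < ε₀` there are `u, v` on the unit sphere, both different from
`x` and `-x`, with `max ‖u - x‖ ‖v + x‖ ≤ ε` and `‖u - v‖ ≤ 2 - δ * ε`. -/
theorem stmt1 {X : Type*} [NormedAddCommGroup X] [NormedSpace ℝ X]
    [FiniteDimensional ℝ X] (x : X) (hx : ‖x‖ = 1) :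
    ¬ DifferentiableAt ℝ (fun z : X => ‖z‖) x ↔
      ∃ δ > (0:ℝ), ∃ ε₀ > (0:ℝ), ∀ ε : ℝ, 0 < ε → ε < ε₀ →
        ∃ u v : X, ‖u‖ = 1 ∧ ‖v‖ = 1 ∧ u ≠ x ∧ u ≠ -x ∧ v ≠ x ∧ v ≠ -x ∧
          max ‖u - x‖ ‖v + x‖ ≤ ε ∧ ‖u - v‖ ≤ 2 - δ * ε := by
  constructor
  · intro hd
    obtain ⟨y, hy, α, β, hαβ, hα, hβ⟩ := exists_supporting_slopes_of_not_differentiableAt_norm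
      (norm_ne_zero_iff.1 (hx ▸ one_ne_zero)) hd
    rw [hx] at hα hβ
    exact exists_near_antipodal_of_supporting_slopes hx hy hαβ hα hβ
  · rintro ⟨δ, hδ, ε₀, hε₀, h⟩ hd
    obtain ⟨ε, ⟨hε, hεε₀⟩, hlt⟩ := (Eventually.and (Ioo_mem_nhdsGT hε₀)
      (eventually_lt_norm_sub_of_differentiableAt_norm hx hd hδ)).exists
    obtain ⟨u, v, hu, hv, -, -, -, -, huv, hle⟩ := h ε hε hεε₀
    exact (hlt u v hu hv huv).not_ge hle
end

section
/- Let X and Y be finite-dimensional normed spaces and suppose there exists a surjective isometry τ : S_X → S_Y between their unit spheres. Then the norm of Y is differentiable (at every nonzero point) if and only if the norm of X is differentiable (at every nonzero point). -/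
/-!
If the unit sphere of `F` embeds isometrically, by `υ`, into the unit sphere of a space `E` whose
norm is differentiable away from `0`, then so is the norm of `F`; applied to `τ` and to `τ⁻¹` this
gives the equivalence.

Fix a unit vector `u` of `F` and put `x₀ = υ u`, `x₁ = υ (-u)`. As `‖x₀ - x₁‖ = 2`, the smooth
points `x₀` and `-x₁` have the same derivative `D`, a functional of norm at most one, so for unit
vectors `a, d` of `E` we get `‖a - d‖ ≥ D a - D d ≥ 2 - o(‖a - x₀‖ + ‖d - x₁‖)`. Transported by
`υ`: for unit vectors `p, q` of `F` near `u`, `‖p + q‖ ≥ 2 - o(‖p - u‖ + ‖q - u‖)`. With `p, q` the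
normalisations of `u ± h` this yields `‖u + h‖ + ‖u - h‖ - 2 = o(‖h‖)`, and then any norming
functional of `u` is a derivative of the norm at `u`.
-/

open Asymptotics Filter Metric Topology

section

variable {E F : Type*} [NormedAddCommGroup E] [NormedSpace ℝ E]
  [NormedAddCommGroup F] [NormedSpace ℝ F]

theorem ContinuousLinearMap.apply_le_norm_of_norm_le_one {g : StrongDual ℝ E} (hg : ‖g‖ ≤ 1)
    (y : E) : g y ≤ ‖y‖ :=
  (le_abs_self _).trans <| by simpa using g.le_of_opNorm_le hg y

theorem DifferentiableAt.fderiv_norm_eq_of_norm_le_one {x : E}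
    (hx : DifferentiableAt ℝ (‖·‖) x) {g : StrongDual ℝ E} (hg : ‖g‖ ≤ 1) (hgx : g x = ‖x‖) :
    fderiv ℝ (‖·‖) x = g := by
  have hmin : IsLocalMin (fun y => ‖y‖ - g y) x := Eventually.of_forall fun y => by
    simpa [hgx] using g.apply_le_norm_of_norm_le_one hg y
  exact sub_eq_zero.1 (hmin.hasFDerivAt_eq_zero (hx.hasFDerivAt.sub g.hasFDerivAt))

theorem fderiv_norm_eq_of_norm_add_eq {x y : E} (hx : DifferentiableAt ℝ (‖·‖) x)
    (hy : DifferentiableAt ℝ (‖·‖) y) (hxy : ‖x + y‖ = ‖x‖ + ‖y‖) :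
    fderiv ℝ (‖·‖) x = fderiv ℝ (‖·‖) y := by
  obtain ⟨g, hg, hgxy⟩ := exists_dual_vector'' ℝ (x + y)
  have hgx := g.apply_le_norm_of_norm_le_one hg x
  have hgy := g.apply_le_norm_of_norm_le_one hg y
  rw [map_add, hxy, RCLike.ofReal_real_eq_id, id_eq] at hgxy
  rw [hx.fderiv_norm_eq_of_norm_le_one hg (by linarith),
    hy.fderiv_norm_eq_of_norm_le_one hg (by linarith)]

theorem DifferentiableAt.isLittleO_norm_sub_fderiv_norm {x : E}
    (hx : DifferentiableAt ℝ (‖·‖) x) :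
    (fun a => ‖a‖ - fderiv ℝ (‖·‖) x a) =o[𝓝 x] fun a => a - x :=
  hx.hasFDerivAt.isLittleO.congr_left fun a => by rw [map_sub, hx.fderiv_norm_self]; ring

theorem isLittleO_norm_add_norm_sub_norm_add {x y : E} (hx : DifferentiableAt ℝ (‖·‖) x)
    (hy : DifferentiableAt ℝ (‖·‖) y) (hxy : ‖x + y‖ = ‖x‖ + ‖y‖) :
    (fun p : E × E => ‖p.1‖ + ‖p.2‖ - ‖p.1 + p.2‖) =o[𝓝 (x, y)] fun p => p - (x, y) := by
  set D := fderiv ℝ (‖·‖) x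
  have hD : ‖D‖ ≤ 1 := by
    simpa using norm_fderiv_le_of_lipschitz ℝ (lipschitzWith_one_norm (E := E))
  have hgap₁ : (fun p : E × E => ‖p.1‖ - D p.1) =o[𝓝 (x, y)] fun p => p - (x, y) :=
    (hx.isLittleO_norm_sub_fderiv_norm.comp_tendsto (continuous_fst.tendsto (x, y))).trans_isBigO
      (isBigO_fst_prod' (f' := fun p : E × E => p - (x, y)))
  have hgap₂ : (fun p : E × E => ‖p.2‖ - D p.2) =o[𝓝 (x, y)] fun p => p - (x, y) := by
    rw [show D = fderiv ℝ (‖·‖) y from fderiv_norm_eq_of_norm_add_eq hx hy hxy]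
    exact (hy.isLittleO_norm_sub_fderiv_norm.comp_tendsto
      (continuous_snd.tendsto (x, y))).trans_isBigO
        (isBigO_snd_prod' (f' := fun p : E × E => p - (x, y)))
  refine IsBigO.trans_isLittleO (isBigO_of_le _ fun p => ?_) (hgap₁.add hgap₂)
  have h₁ := D.apply_le_norm_of_norm_le_one hD p.1
  have h₂ := D.apply_le_norm_of_norm_le_one hD p.2
  have h₁₂ := D.apply_le_norm_of_norm_le_one hD (p.1 + p.2)
  rw [map_add] at h₁₂
  rw [Real.norm_eq_abs, Real.norm_eq_abs, abs_of_nonneg (by linarith [norm_add_le p.1 p.2]),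
    abs_of_nonneg (by linarith)]
  linarith

theorem norm_inv_norm_smul_sub_le {w : F} (hw : ‖w‖ = 1) (v : F) :
    ‖‖v‖⁻¹ • v - w‖ ≤ 2 * ‖v - w‖ := by
  rcases eq_or_ne v 0 with rfl | hv
  · simp [hw]
  have hv' : ‖‖v‖⁻¹ • v - v‖ = |1 - ‖v‖| := by
    have h : (‖v‖⁻¹ - 1) * ‖v‖ = 1 - ‖v‖ := by field_simp
    rw [← h, abs_mul, abs_norm, ← Real.norm_eq_abs, ← norm_smul, sub_smul, one_smul]
  calc ‖‖v‖⁻¹ • v - w‖ ≤ ‖‖v‖⁻¹ • v - v‖ + ‖v - w‖ := norm_sub_le_norm_sub_add_norm_sub _ _ _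
    _ ≤ ‖v - w‖ + ‖v - w‖ := by
      rw [hv', ← hw]
      gcongr
      exact abs_norm_sub_norm_le w v |>.trans_eq (norm_sub_rev _ _)
    _ = 2 * ‖v - w‖ := by ring

theorem two_mul_norm_le_norm_add_add_norm_sub (w h : F) : 2 * ‖w‖ ≤ ‖w + h‖ + ‖w - h‖ := by
  have := norm_add_le (w + h) (w - h)
  rwa [add_add_sub_cancel, ← two_smul ℝ, norm_smul, Real.norm_two] at this

theorem norm_add_add_norm_sub_sub_two_le {w h : F} (hw : ‖w‖ = 1) (ht : ‖h‖ ≤ 1 / 4) :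
    ‖w + h‖ + ‖w - h‖ - 2 ≤
      2 * (2 - ‖‖w + h‖⁻¹ • (w + h) + ‖w - h‖⁻¹ • (w - h)‖) + 8 * ‖h‖ ^ 2 := by
  set p := ‖w + h‖⁻¹ • (w + h)
  set q := ‖w - h‖⁻¹ • (w - h)
  have hp : ‖p - w‖ ≤ 2 * ‖h‖ := by
    simpa only [add_sub_cancel_left] using norm_inv_norm_smul_sub_le hw (w + h)
  have hq : ‖q - w‖ ≤ 2 * ‖h‖ := by
    simpa only [sub_sub_cancel_left, norm_neg] using norm_inv_norm_smul_sub_le hw (w - h)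
  have hpq : ‖p - q‖ ≤ 4 * ‖h‖ := by
    linarith [norm_sub_le_norm_sub_add_norm_sub p w q, norm_sub_rev q w]
  have hsum := two_mul_norm_le_norm_add_add_norm_sub w h
  rw [hw, mul_one] at hsum
  have hdiff : |‖w + h‖ - ‖w - h‖| ≤ 2 * ‖h‖ := by
    have := abs_norm_sub_norm_le (w + h) (w - h)
    rwa [add_sub_sub_cancel, ← two_smul ℝ, norm_smul, Real.norm_two] at this
  have hη : 1 ≤ ‖p + q‖ := by
    have := norm_sub_le (p + q) ((p - w) + (q - w))
    rw [show p + q - (p - w + (q - w)) = (2 : ℝ) • w by module, norm_smul, hw,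
      Real.norm_two] at this
    linarith [norm_add_le (p - w) (q - w)]
  have hwh : ‖w + h‖ ≠ 0 := by
    have := norm_sub_le (w + h) h
    rw [add_sub_cancel_right] at this
    linarith
  have hwh' : ‖w - h‖ ≠ 0 := by linarith [norm_sub_norm_le w h]
  -- `(w + h) + (w - h) = ‖w + h‖ • p + ‖w - h‖ • q`, regrouped along `p + q` and `p - q`
  have hdecomp : ((‖w + h‖ + ‖w - h‖) / 2) • (p + q) =
      (2 : ℝ) • w - ((‖w + h‖ - ‖w - h‖) / 2) • (p - q) := by
    rw [show ((‖w + h‖ + ‖w - h‖) / 2) • (p + q) = ‖w + h‖ • p + ‖w - h‖ • q -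
      ((‖w + h‖ - ‖w - h‖) / 2) • (p - q) by module, smul_inv_smul₀ hwh, smul_inv_smul₀ hwh']
    module
  have h2 : (‖w + h‖ + ‖w - h‖) / 2 * ‖p + q‖ ≤ 2 + |‖w + h‖ - ‖w - h‖| / 2 * ‖p - q‖ := by
    have := norm_sub_le ((2 : ℝ) • w) (((‖w + h‖ - ‖w - h‖) / 2) • (p - q))
    rwa [← hdecomp, norm_smul, norm_smul, norm_smul, hw, Real.norm_two, Real.norm_eq_abs,
      Real.norm_eq_abs, abs_div, abs_div, abs_two, mul_one,
      abs_of_nonneg (by linarith : (0:ℝ) ≤ ‖w + h‖ + ‖w - h‖)] at this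
  nlinarith [mul_le_mul hdiff hpq (norm_nonneg _) (by positivity),
    mul_nonneg (sub_nonneg.2 hsum) (sub_nonneg.2 hη)]

theorem differentiableAt_norm_of_isLittleO {w : F}
    (h : (fun h => ‖w + h‖ + ‖w - h‖ - 2 * ‖w‖) =o[𝓝 0] fun h => h) :
    DifferentiableAt ℝ (‖·‖) w := by
  obtain ⟨g, hg, hgw⟩ := exists_dual_vector'' ℝ w
  refine (hasFDerivAt_iff_isLittleO_nhds_zero.2
    (IsBigO.trans_isLittleO ?_ h)).differentiableAt (f' := g)
  refine isBigO_of_le _ fun h => ?_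
  have h₁ := g.apply_le_norm_of_norm_le_one hg (w + h)
  have h₂ := g.apply_le_norm_of_norm_le_one hg (w - h)
  simp only [map_add, map_sub, hgw, RCLike.ofReal_real_eq_id, id_eq] at h₁ h₂
  rw [Real.norm_eq_abs, Real.norm_eq_abs, abs_of_nonneg (by linarith),
    abs_of_nonneg (by linarith)]
  linarith

theorem differentiableAt_norm_of_forall_two_sub_norm_add_le {u : F} (hu : ‖u‖ = 1)
    (hflat : ∀ ε > 0, ∃ δ > 0, ∀ p q : F, ‖p‖ = 1 → ‖q‖ = 1 → ‖p - u‖ < δ → ‖q - u‖ < δ →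
      2 - ‖p + q‖ ≤ ε * max ‖p - u‖ ‖q - u‖) :
    DifferentiableAt ℝ (‖·‖) u := by
  refine differentiableAt_norm_of_isLittleO (isLittleO_iff.2 fun c hc => ?_)
  obtain ⟨δ, hδ, hpq⟩ := hflat (c / 8) (by positivity)
  have hsmall : ∀ r > 0, ∀ᶠ h in 𝓝 (0 : F), ‖h‖ < r := fun r hr =>
    tendsto_norm_zero.eventually_lt_const hr
  filter_upwards [hsmall (δ / 2) (by positivity), hsmall (1 / 4) (by norm_num),
    hsmall (c / 16) (by positivity)] with h hδh h4 hch
  have hp := norm_inv_norm_smul_sub_le hu (u + h)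
  have hq := norm_inv_norm_smul_sub_le hu (u - h)
  rw [add_sub_cancel_left] at hp
  rw [sub_sub_cancel_left, norm_neg] at hq
  have hne : ∀ v : F, ‖v - u‖ < 1 → ‖‖v‖⁻¹ • v‖ = 1 := fun v hv =>
    norm_smul_inv_norm (𝕜 := ℝ) fun hv0 => by simp [hv0, hu] at hv
  have hnorm := hpq (‖u + h‖⁻¹ • (u + h)) (‖u - h‖⁻¹ • (u - h))
    (hne _ (by rw [add_sub_cancel_left]; linarith))
    (hne _ (by rw [sub_sub_cancel_left, norm_neg]; linarith)) (by linarith) (by linarith)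
  have hσ := norm_add_add_norm_sub_sub_two_le hu h4.le
  rw [Real.norm_eq_abs, hu,
    abs_of_nonneg (by linarith [two_mul_norm_le_norm_add_add_norm_sub u h, hu])]
  have hmax := mul_le_mul_of_nonneg_left (max_le hp hq) (by positivity : (0 : ℝ) ≤ c / 8)
  have hsq : ‖h‖ ^ 2 ≤ c / 16 * ‖h‖ := by rw [sq]; gcongr
  linarith

theorem differentiableAt_norm_of_isometry_sphere {υ : sphere (0 : F) 1 → sphere (0 : E) 1}
    (hυ : Isometry υ) (hE : ∀ x : E, x ≠ 0 → DifferentiableAt ℝ (‖·‖) x) {w : F} (hw : w ≠ 0) :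
    DifferentiableAt ℝ (‖·‖) w := by
  have hdist (u v : sphere (0 : F) 1) : ‖(υ u : E) - υ v‖ = ‖(u : F) - v‖ := by
    simpa [Subtype.dist_eq, dist_eq_norm] using hυ.dist_eq u v
  suffices ∀ u : sphere (0 : F) 1, DifferentiableAt ℝ (‖·‖) (u : F) by
    have hw' : ‖w‖ ≠ 0 := norm_ne_zero_iff.2 hw
    simpa [smul_inv_smul₀ hw'] using
      (differentiableAt_norm_smul hw').1 (this ⟨‖w‖⁻¹ • w, by simp [norm_smul, hw']⟩)
  intro u
  set x₀ : E := (υ u : E)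
  set x₁ : E := (υ (-u) : E)
  have hx₀₁ : ‖x₀ + -x₁‖ = ‖x₀‖ + ‖-x₁‖ := by
    rw [← sub_eq_add_neg, hdist, coe_neg_sphere, sub_neg_eq_add, ← two_smul ℝ, norm_smul,
      norm_neg, norm_eq_of_mem_sphere, norm_eq_of_mem_sphere, norm_eq_of_mem_sphere]
    norm_num
  have hsmooth := isLittleO_norm_add_norm_sub_norm_add (hE x₀ (ne_zero_of_mem_unit_sphere _))
    (hE (-x₁) (neg_ne_zero.2 (ne_zero_of_mem_unit_sphere _))) hx₀₁
  refine differentiableAt_norm_of_forall_two_sub_norm_add_le (by simp) fun ε hε => ?_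
  obtain ⟨δ, hδ, hnear⟩ := Metric.eventually_nhds_iff.1 (isLittleO_iff.1 hsmooth hε)
  refine ⟨δ, hδ, fun p q hp hq hpu hqu => ?_⟩
  let p' : sphere (0 : F) 1 := ⟨p, by simpa using hp⟩
  let q' : sphere (0 : F) 1 := ⟨-q, by simpa using hq⟩
  have hp' : ‖(υ p' : E) - x₀‖ = ‖p - u‖ := hdist p' u
  have hq' : ‖-(υ q' : E) - -x₁‖ = ‖q - u‖ := by
    rw [neg_sub_neg, norm_sub_rev, hdist, coe_neg_sphere, ← norm_neg]
    simp [q', neg_add_eq_sub]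
  have hpq : ‖(υ p' : E) + -υ q'‖ = ‖p + q‖ := by
    rw [← sub_eq_add_neg, hdist]
    simp [p', q']
  have hgap := hnear (y := ((υ p' : E), -(υ q' : E)))
    (by rw [Prod.dist_eq, dist_eq_norm, dist_eq_norm, hp', hq']; exact max_lt hpu hqu)
  simp only [Prod.norm_def, Prod.fst_sub, Prod.snd_sub, hp', hq', hpq, norm_neg,
    norm_eq_of_mem_sphere, Real.norm_eq_abs] at hgap
  linarith [le_abs_self (1 + 1 - ‖p + q‖)]

end

theorem stmt2_general {X Y : Type*} [NormedAddCommGroup X] [NormedSpace ℝ X]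
    [NormedAddCommGroup Y] [NormedSpace ℝ Y]
    (τ : X → Y)
    (hmap : ∀ u : X, ‖u‖ = 1 → ‖τ u‖ = 1)
    (hsurj : ∀ w : Y, ‖w‖ = 1 → ∃ u : X, ‖u‖ = 1 ∧ τ u = w)
    (hiso : ∀ u v : X, ‖u‖ = 1 → ‖v‖ = 1 → ‖τ u - τ v‖ = ‖u - v‖) :
    (∀ w : Y, w ≠ 0 → DifferentiableAt ℝ (fun z : Y => ‖z‖) w) ↔
      (∀ u : X, u ≠ 0 → DifferentiableAt ℝ (fun z : X => ‖z‖) u) := by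
  let T : sphere (0 : X) 1 → sphere (0 : Y) 1 := fun u =>
    ⟨τ u, by simpa using hmap u (by simp)⟩
  have hT : Isometry T := Isometry.of_dist_eq fun u v => by
    simp [T, Subtype.dist_eq, dist_eq_norm, hiso u v (by simp) (by simp)]
  have hTsurj : Function.Surjective T := fun w => by
    obtain ⟨u, hu, hτu⟩ := hsurj w (by simp)
    exact ⟨⟨u, by simpa using hu⟩, Subtype.ext hτu⟩
  let e : sphere (0 : X) 1 ≃ᵢ sphere (0 : Y) 1 := ⟨Equiv.ofBijective T ⟨hT.injective, hTsurj⟩, hT⟩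
  exact ⟨fun hY _ hu => differentiableAt_norm_of_isometry_sphere hT hY hu,
    fun hX _ hw => differentiableAt_norm_of_isometry_sphere e.symm.isometry hX hw⟩

/-- Let `X`, `Y` be finite-dimensional real normed spaces admitting a
surjective isometry `τ` between their unit spheres. Then the norm of `Y` is
differentiable at every nonzero point iff the norm of `X` is differentiable at every
nonzero point. -/
theorem stmt2 {X Y : Type*} [NormedAddCommGroup X] [NormedSpace ℝ X]
    [NormedAddCommGroup Y] [NormedSpace ℝ Y]
    [FiniteDimensional ℝ X] [FiniteDimensional ℝ Y]
    (τ : X → Y)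
    (hmap : ∀ u : X, ‖u‖ = 1 → ‖τ u‖ = 1)
    (hsurj : ∀ w : Y, ‖w‖ = 1 → ∃ u : X, ‖u‖ = 1 ∧ τ u = w)
    (hiso : ∀ u v : X, ‖u‖ = 1 → ‖v‖ = 1 → ‖τ u - τ v‖ = ‖u - v‖) :
    (∀ w : Y, w ≠ 0 → DifferentiableAt ℝ (fun z : Y => ‖z‖) w) ↔
      (∀ u : X, u ≠ 0 → DifferentiableAt ℝ (fun z : X => ‖z‖) u) :=
  stmt2_general τ hmap hsurj hiso
end

section
/- On ℝ² with the hexagonal norm ‖(a,b)‖ = max{|a|,|b|} if ab ≥ 0 and ‖(a,b)‖ = |a| + |b| if ab < 0, the norm is not differentiable at x = (0,1), yet with y = (1, 1/3) and z = (1, 2/3) one has ‖γ_z(t) − y‖ = 1/3 + t for all t ∈ [−1/3, 1/3]; in particular t ↦ ‖γ_z(t) − y‖ is differentiable at t = 0. -/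
/-!
Along the horizontal line `b = 1` the hexagonal norm is `1` for `0 ≤ a ≤ 1` and `1 - a` for
`a < 0`, so it has a corner at `(0, 1)`: `|h| = 2 (‖(h, 1)‖ - 1) + h` near `h = 0`.
On the other hand `γ_z(t) - y = (0, 1/3 + t)` lies on the vertical axis, where the norm is just
`|b|`, and `1/3 + t` stays away from `0` near `t = 0`.
-/

/-- The hexagonal norm on `ℝ²`: `‖(a,b)‖ = max |a| |b|` if `a*b ≥ 0` and
`|a| + |b|` if `a*b < 0`. -/
noncomputable def hexNorm (p : ℝ × ℝ) : ℝ :=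
  if 0 ≤ p.1 * p.2 then max |p.1| |p.2| else |p.1| + |p.2|

theorem hexNorm_zero_left (b : ℝ) : hexNorm (0, b) = |b| := by
  simp [hexNorm]

theorem hexNorm_one_left {b : ℝ} (hb₀ : 0 ≤ b) (hb₁ : b ≤ 1) : hexNorm (1, b) = 1 := by
  simp [hexNorm, hb₀, abs_of_nonneg hb₀, hb₁]

theorem hexNorm_mk_one {a : ℝ} (ha : a ≤ 1) : hexNorm (a, 1) = 1 + (|a| - a) / 2 := by
  rcases le_or_gt 0 a with ha₀ | ha₀
  · simp [hexNorm, ha₀, abs_of_nonneg ha₀, ha]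
  · simp only [hexNorm, mul_one, abs_one, if_neg (not_le.mpr ha₀), abs_of_neg ha₀]
    ring

theorem hexNorm_sub_of_fst_eq (a b c : ℝ) : hexNorm ((a, b) - (a, c)) = |b - c| := by
  rw [Prod.mk_sub_mk, sub_self, hexNorm_zero_left]

open Topology in
theorem not_differentiableAt_hexNorm_zero_one : ¬ DifferentiableAt ℝ hexNorm (0, 1) := by
  intro hdiff
  have hslice : DifferentiableAt ℝ (fun h : ℝ => hexNorm (h, 1)) 0 :=
    DifferentiableAt.comp (g := hexNorm) (0 : ℝ) hdiff
      (differentiableAt_id.prodMk (differentiableAt_const (1 : ℝ)))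
  have hline : DifferentiableAt ℝ (fun h : ℝ => 2 * (hexNorm (h, 1) - 1) + h) 0 :=
    ((hslice.sub_const 1).const_mul 2).add differentiableAt_id
  have hcorner : (fun h : ℝ => 2 * (hexNorm (h, 1) - 1) + h) =ᶠ[𝓝 0] fun h => |h| := by
    filter_upwards [Iio_mem_nhds one_pos] with h hh
    rw [hexNorm_mk_one hh.le]
    ring
  exact not_differentiableAt_abs_zero (hline.congr_of_eventuallyEq hcorner.symm)

/-- Remark: strict convexity cannot be dropped. For the hexagonal
norm on `ℝ²`, the norm is not differentiable at `x = (0,1)`; nevertheless, with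
`y = (1, 1/3)` and `z = (1, 2/3)`, the natural parameterization of the unit sphere near
`z` is `t ↦ (1, 2/3 + t)` for `t ∈ [-1/3, 1/3]` (these points lie on the unit sphere and
the parameterization is arc-length), and along it `‖γ_z t - y‖ = 1/3 + t`; in particular
`t ↦ ‖γ_z t - y‖` is differentiable at `t = 0`. -/
theorem stmt5 :
    (¬ DifferentiableAt ℝ hexNorm ((0:ℝ), (1:ℝ))) ∧
    (∀ t ∈ Set.Icc (-(1/3) : ℝ) (1/3), hexNorm (1, 2/3 + t) = 1) ∧
    (∀ s ∈ Set.Icc (-(1/3) : ℝ) (1/3), ∀ t ∈ Set.Icc (-(1/3) : ℝ) (1/3),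
      hexNorm ((1, 2/3 + s) - (1, 2/3 + t)) = |s - t|) ∧
    (∀ t ∈ Set.Icc (-(1/3) : ℝ) (1/3),
      hexNorm ((1, 2/3 + t) - (1, 1/3)) = 1/3 + t) ∧
    DifferentiableAt ℝ (fun t : ℝ => hexNorm ((1, 2/3 + t) - (1, 1/3))) 0 := by
  have hdist (t : ℝ) : hexNorm ((1, 2/3 + t) - (1, 1/3)) = |1/3 + t| := by
    rw [hexNorm_sub_of_fst_eq]
    ring_nf
  refine ⟨not_differentiableAt_hexNorm_zero_one, ?_, ?_, ?_, ?_⟩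
  · rintro t ⟨ht₀, ht₁⟩
    exact hexNorm_one_left (by linarith) (by linarith)
  · intro s _ t _
    rw [hexNorm_sub_of_fst_eq]
    ring_nf
  · rintro t ⟨ht₀, -⟩
    rw [hdist, abs_of_nonneg (by linarith)]
  · simp only [hdist]
    exact ((differentiableAt_const _).add differentiableAt_id).abs (by norm_num)
end

section
/- Let C ⊂ ℝ² be a Jordan curve enclosing a convex region whose four extreme points in the coordinate directions are all distinct: there are points c¹, c², c³, c⁴ ∈ C attaining respectively the minimum first coordinate, minimum second coordinate, maximum first coordinate, and maximum second coordinate on C, with these minima/maxima attained strictly (each extremal point strictly beats the other three in its coordinate). Then for every x ∈ ℝ² there exist u, v, w ∈ C and t ≠ 0 such that u − v = t·x, w has the same first coordinate as u, and w has the same second coordinate as v. -/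
open Set Filter Topology

section Frontier

variable {E : Type*} [AddCommGroup E] [Module ℝ E] [TopologicalSpace E] [ContinuousAdd E]
  [ContinuousSMul ℝ E] {K : Set E} {p d : E}

theorem exists_pos_add_smul_mem_of_mem_interior (hp : p ∈ interior K) (d : E) :
    ∃ s : ℝ, 0 < s ∧ p + s • d ∈ K := by
  have hlim : Tendsto (fun s : ℝ => p + s • d) (𝓝[>] 0) (𝓝 p) := by
    have : Continuous fun s : ℝ => p + s • d := by fun_prop
    simpa using (this.tendsto 0).mono_left nhdsWithin_le_nhds
  obtain ⟨s, hsK, hs⟩ :=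
    ((hlim.eventually (mem_interior_iff_mem_nhds.1 hp)).and self_mem_nhdsWithin).exists
  exact ⟨s, hs, hsK⟩

theorem mem_frontier_of_forall_add_smul_notMem (hK : IsClosed K) (hp : p ∈ K)
    (h : ∀ s : ℝ, 0 < s → p + s • d ∉ K) : p ∈ frontier K := by
  rw [hK.frontier_eq]
  refine ⟨hp, fun hint => ?_⟩
  obtain ⟨s, hs, hsK⟩ := exists_pos_add_smul_mem_of_mem_interior hint d
  exact h s hs hsK

theorem mem_frontier_of_isMaxOn (hK : IsClosed K) (f : E →L[ℝ] ℝ) (hd : 0 < f d) (hp : p ∈ K)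
    (hmax : IsMaxOn f K p) : p ∈ frontier K := by
  refine mem_frontier_of_forall_add_smul_notMem hK hp (d := d) fun s hs hsK => ?_
  have : f (p + s • d) ≤ f p := hmax hsK
  rw [map_add, map_smul, smul_eq_mul] at this
  linarith [mul_pos hs hd]

theorem le_of_forall_mem_frontier_le [T2Space E] (hK : IsCompact K) (f : E →L[ℝ] ℝ)
    (hd : 0 < f d) {c : ℝ} (h : ∀ p ∈ frontier K, f p ≤ c) : ∀ q ∈ K, f q ≤ c := by
  intro q hq
  obtain ⟨p, hpK, hmax⟩ := hK.exists_isMaxOn ⟨q, hq⟩ f.continuous.continuousOn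
  exact (hmax hq).trans (h p (mem_frontier_of_isMaxOn hK.isClosed f hd hpK hmax))

theorem ge_of_forall_mem_frontier_ge [T2Space E] (hK : IsCompact K) (f : E →L[ℝ] ℝ)
    (hd : f d < 0) {c : ℝ} (h : ∀ p ∈ frontier K, c ≤ f p) : ∀ q ∈ K, c ≤ f q := by
  have := le_of_forall_mem_frontier_le hK (-f) (d := d) (by simpa using hd) (c := -c)
    (fun p hp => by simpa using h p hp)
  intro q hq
  simpa using this q hq

end Frontier

theorem ConvexOn.le_add_abs_sub_mul {s : Set ℝ} {f : ℝ → ℝ} (hf : ConvexOn ℝ s f) {a b e : ℝ}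
    (hb : b ∈ s) (he : e ∈ s) (ha : a ∈ segment ℝ b e) :
    f a ≤ f b + |a - b| * (|f e - f b| / |e - b|) := by
  rw [segment_eq_image'] at ha
  obtain ⟨θ, ⟨hθ0, hθ1⟩, rfl⟩ := ha
  simp only [smul_eq_mul, add_sub_cancel_left]
  rcases eq_or_ne e b with rfl | heb
  · simp
  have hconv : f (b + θ * (e - b)) ≤ (1 - θ) * f b + θ * f e := by
    simpa [show (1 - θ) * b + θ * e = b + θ * (e - b) by ring] using
      hf.2 hb he (sub_nonneg.2 hθ1) hθ0 (by ring)
  rw [abs_mul, abs_of_nonneg hθ0, mul_assoc,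
    mul_div_cancel₀ _ (abs_ne_zero.2 (sub_ne_zero.2 heb))]
  calc f (b + θ * (e - b)) ≤ f b + θ * (f e - f b) := by linarith
    _ ≤ f b + θ * |f e - f b| := by gcongr; exact le_abs_self _

theorem ConvexOn.upperSemicontinuousOn_of_isCompact {s : Set ℝ} {f : ℝ → ℝ}
    (hf : ConvexOn ℝ s f) (hs : IsCompact s) : UpperSemicontinuousOn f s := by
  intro b hb y hy
  obtain ⟨m, hm, hmb⟩ := hs.exists_isLeast ⟨b, hb⟩
  obtain ⟨M, hM, hMb⟩ := hs.exists_isGreatest ⟨b, hb⟩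
  set L := max (|f m - f b| / |m - b|) (|f M - f b| / |M - b|)
  have hbound : ∀ a ∈ s, f a ≤ f b + |a - b| * L := by
    intro a ha
    rcases le_total a b with hab | hab
    · refine (hf.le_add_abs_sub_mul hb hm ?_).trans ?_
      · exact segment_symm ℝ m b ▸ Icc_subset_segment ⟨hmb ha, hab⟩
      · gcongr; exact le_max_left _ _
    · refine (hf.le_add_abs_sub_mul hb hM ?_).trans ?_
      · exact Icc_subset_segment ⟨hab, hMb ha⟩
      · gcongr; exact le_max_right _ _
  have hcont : ContinuousAt (fun a => f b + |a - b| * L) b := by fun_prop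
  have hlt : ∀ᶠ a in 𝓝 b, f b + |a - b| * L < y :=
    hcont.eventually (gt_mem_nhds (by simpa using hy))
  filter_upwards [nhdsWithin_le_nhds hlt, self_mem_nhdsWithin] with a ha has
  exact (hbound a has).trans_lt ha

noncomputable def lowerBoundary (K : Set (ℝ × ℝ)) (a : ℝ) : ℝ := sInf {y | (a, y) ∈ K}

noncomputable def upperBoundary (K : Set (ℝ × ℝ)) (a : ℝ) : ℝ := sSup {y | (a, y) ∈ K}

noncomputable def leftBoundary (K : Set (ℝ × ℝ)) (b : ℝ) : ℝ := sInf {x | (x, b) ∈ K}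

def reflectSnd : (ℝ × ℝ) ≃L[ℝ] ℝ × ℝ :=
  (ContinuousLinearEquiv.refl ℝ ℝ).prodCongr (ContinuousLinearEquiv.neg ℝ)

@[simp]
theorem reflectSnd_apply (p : ℝ × ℝ) : reflectSnd p = (p.1, -p.2) := rfl

section Boundary

variable {K : Set (ℝ × ℝ)} {a b y : ℝ}

theorem isCompact_column (hK : IsCompact K) (a : ℝ) : IsCompact {y | (a, y) ∈ K} :=
  (isEmbedding_prodMkRight a).isInducing.isCompact_preimage
    (isClosedMap_prodMk_left a).isClosed_range hK

theorem isCompact_row (hK : IsCompact K) (b : ℝ) : IsCompact {x | (x, b) ∈ K} :=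
  (isEmbedding_prodMkLeft b).isInducing.isCompact_preimage
    (isClosedMap_prodMk_right b).isClosed_range hK

theorem lowerBoundary_le (hK : IsCompact K) (h : (a, y) ∈ K) : lowerBoundary K a ≤ y :=
  csInf_le (isCompact_column hK a).bddBelow h

theorem le_upperBoundary (hK : IsCompact K) (h : (a, y) ∈ K) : y ≤ upperBoundary K a :=
  le_csSup (isCompact_column hK a).bddAbove h

theorem leftBoundary_le (hK : IsCompact K) (h : (y, b) ∈ K) : leftBoundary K b ≤ y :=
  csInf_le (isCompact_row hK b).bddBelow h

theorem lowerBoundary_mem (hK : IsCompact K) (h : (a, y) ∈ K) : (a, lowerBoundary K a) ∈ K :=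
  (isCompact_column hK a).sInf_mem ⟨y, h⟩

theorem upperBoundary_mem (hK : IsCompact K) (h : (a, y) ∈ K) : (a, upperBoundary K a) ∈ K :=
  (isCompact_column hK a).sSup_mem ⟨y, h⟩

theorem leftBoundary_mem (hK : IsCompact K) (h : (y, b) ∈ K) : (leftBoundary K b, b) ∈ K :=
  (isCompact_row hK b).sInf_mem ⟨y, h⟩

theorem lowerBoundary_mem_frontier (hK : IsCompact K) (h : (a, y) ∈ K) :
    (a, lowerBoundary K a) ∈ frontier K :=
  mem_frontier_of_forall_add_smul_notMem hK.isClosed (lowerBoundary_mem hK h) (d := (0, -1))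
    fun s hs hsK => by
      have := lowerBoundary_le hK (y := lowerBoundary K a - s) (by simpa [sub_eq_add_neg] using hsK)
      linarith

theorem upperBoundary_mem_frontier (hK : IsCompact K) (h : (a, y) ∈ K) :
    (a, upperBoundary K a) ∈ frontier K :=
  mem_frontier_of_forall_add_smul_notMem hK.isClosed (upperBoundary_mem hK h) (d := (0, 1))
    fun s hs hsK => by
      have := le_upperBoundary hK (y := upperBoundary K a + s) (by simpa using hsK)
      linarith

theorem leftBoundary_mem_frontier (hK : IsCompact K) (h : (y, b) ∈ K) :
    (leftBoundary K b, b) ∈ frontier K :=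
  mem_frontier_of_forall_add_smul_notMem hK.isClosed (leftBoundary_mem hK h) (d := (-1, 0))
    fun s hs hsK => by
      have := leftBoundary_le hK (y := leftBoundary K b - s) (by simpa [sub_eq_add_neg] using hsK)
      linarith

theorem convexOn_lowerBoundary (hK : IsCompact K) (hKv : Convex ℝ K) :
    ConvexOn ℝ (Prod.fst '' K) (lowerBoundary K) := by
  refine ⟨hKv.linear_image (LinearMap.fst ℝ ℝ ℝ), ?_⟩
  rintro _ ⟨p, hp, rfl⟩ _ ⟨q, hq, rfl⟩ α β hα hβ hαβ
  have hcombo := hKv (lowerBoundary_mem hK hp) (lowerBoundary_mem hK hq) hα hβ hαβ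
  exact lowerBoundary_le hK (by simpa using hcombo)

theorem lowerSemicontinuousOn_lowerBoundary (hK : IsCompact K) :
    LowerSemicontinuousOn (lowerBoundary K) (Prod.fst '' K) := by
  refine lowerSemicontinuousOn_iff_preimage_Iic.2 fun c =>
    ⟨Prod.fst '' (K ∩ Prod.snd ⁻¹' Iic c),
      ((hK.inter_right (isClosed_Iic.preimage continuous_snd)).image continuous_fst).isClosed, ?_⟩
  ext a
  constructor
  · rintro ⟨⟨p, hp, rfl⟩, hc⟩
    exact ⟨⟨p, hp, rfl⟩, _, ⟨lowerBoundary_mem hK hp, hc⟩, rfl⟩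
  · rintro ⟨ha, p, ⟨hp, hpc⟩, rfl⟩
    exact ⟨ha, (lowerBoundary_le hK hp).trans hpc⟩

theorem continuousOn_lowerBoundary (hK : IsCompact K) (hKv : Convex ℝ K) :
    ContinuousOn (lowerBoundary K) (Prod.fst '' K) :=
  continuousOn_iff_lower_upperSemicontinuousOn.2 ⟨lowerSemicontinuousOn_lowerBoundary hK,
    (convexOn_lowerBoundary hK hKv).upperSemicontinuousOn_of_isCompact (hK.image continuous_fst)⟩

theorem upperBoundary_eq_neg_lowerBoundary (K : Set (ℝ × ℝ)) (a : ℝ) :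
    upperBoundary K a = -lowerBoundary (reflectSnd ⁻¹' K) a := by
  rw [lowerBoundary, show {y | (a, y) ∈ reflectSnd ⁻¹' K} = -{y | (a, y) ∈ K} from rfl,
    Real.sInf_neg, neg_neg, upperBoundary]

theorem continuousOn_upperBoundary (hK : IsCompact K) (hKv : Convex ℝ K) :
    ContinuousOn (upperBoundary K) (Prod.fst '' K) := by
  have hfst : Prod.fst '' (reflectSnd ⁻¹' K) = Prod.fst '' K := by
    ext a
    constructor
    · rintro ⟨p, hp, rfl⟩; exact ⟨_, hp, rfl⟩
    · rintro ⟨p, hp, rfl⟩; exact ⟨reflectSnd p, by simpa using hp, rfl⟩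
  have hc : IsCompact (reflectSnd ⁻¹' K) := reflectSnd.toHomeomorph.isCompact_preimage.2 hK
  have hv : Convex ℝ (reflectSnd ⁻¹' K) :=
    hKv.linear_preimage (reflectSnd : (ℝ × ℝ) →ₗ[ℝ] ℝ × ℝ)
  have h := (continuousOn_lowerBoundary hc hv).neg
  rw [hfst] at h
  exact h.congr fun a _ => upperBoundary_eq_neg_lowerBoundary K a

theorem continuousOn_leftBoundary (hK : IsCompact K) (hKv : Convex ℝ K) :
    ContinuousOn (leftBoundary K) (Prod.snd '' K) := by
  have hc : IsCompact (Prod.swap ⁻¹' K) := (Homeomorph.prodComm ℝ ℝ).isCompact_preimage.2 hK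
  have hv : Convex ℝ (Prod.swap ⁻¹' K) :=
    hKv.linear_preimage (LinearEquiv.prodComm ℝ ℝ ℝ : (ℝ × ℝ) →ₗ[ℝ] ℝ × ℝ)
  have hsnd : Prod.fst '' (Prod.swap ⁻¹' K) = Prod.snd '' K := by
    rw [← image_swap_eq_preimage_swap, ← image_comp]; rfl
  exact hsnd ▸ continuousOn_lowerBoundary hc hv

end Boundary

section ConvexBody

variable {K : Set (ℝ × ℝ)} {p q : ℝ × ℝ} {a y : ℝ}

theorem exists_mem_openSegment_fst_eq (ha : a ∈ Ioo p.1 q.1) :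
    ∃ z ∈ openSegment ℝ p q, z.1 = a := by
  have : a ∈ (LinearMap.fst ℝ ℝ ℝ).toAffineMap '' openSegment ℝ p q := by
    rw [image_openSegment]
    simpa [openSegment_eq_Ioo (ha.1.trans ha.2)] using ha
  obtain ⟨z, hz, rfl⟩ := this
  exact ⟨z, hz, rfl⟩

theorem exists_mem_interior_fst_eq (hKv : Convex ℝ K) (hKi : (interior K).Nonempty)
    (hp : p ∈ K) (hq : q ∈ K) (hpa : p.1 < a) (haq : a < q.1) : ∃ z ∈ interior K, z.1 = a := by
  obtain ⟨z, hz⟩ := hKi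
  rcases lt_trichotomy z.1 a with hza | rfl | haz
  · obtain ⟨z', hz', rfl⟩ := exists_mem_openSegment_fst_eq ⟨hza, haq⟩
    exact ⟨z', hKv.openSegment_interior_self_subset_interior hz hq hz', rfl⟩
  · exact ⟨z, hz, rfl⟩
  · obtain ⟨z', hz', rfl⟩ := exists_mem_openSegment_fst_eq ⟨hpa, haz⟩
    rw [openSegment_symm] at hz'
    exact ⟨z', hKv.openSegment_interior_self_subset_interior hz hp hz', rfl⟩

theorem lowerBoundary_lt_upperBoundary (hK : IsCompact K) (hKv : Convex ℝ K)
    (hKi : (interior K).Nonempty) (hp : p ∈ K) (hq : q ∈ K) (hpa : p.1 < a) (haq : a < q.1) :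
    lowerBoundary K a < upperBoundary K a := by
  obtain ⟨⟨a, b⟩, hz, rfl⟩ := exists_mem_interior_fst_eq hKv hKi hp hq hpa haq
  obtain ⟨r, hr, hrK⟩ := exists_pos_add_smul_mem_of_mem_interior hz (0, -1)
  obtain ⟨s, hs, hsK⟩ := exists_pos_add_smul_mem_of_mem_interior hz (0, 1)
  have hlow := lowerBoundary_le hK (y := b - r) (by simpa [sub_eq_add_neg] using hrK)
  have hupp := le_upperBoundary hK (y := b + s) (by simpa using hsK)
  linarith

theorem leftBoundary_le_max (hK : IsCompact K) (hKv : Convex ℝ K) (hp : p ∈ K) (hq : q ∈ K)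
    (hy : y ∈ segment ℝ p.2 q.2) : leftBoundary K y ≤ max p.1 q.1 := by
  obtain ⟨z, hz, rfl⟩ : y ∈ (LinearMap.snd ℝ ℝ ℝ).toAffineMap '' segment ℝ p q := by
    rwa [image_segment]
  have hz1 : z.1 ∈ uIcc p.1 q.1 := segment_eq_uIcc p.1 q.1 ▸ (Prod.segment_subset p q hz).1
  exact (leftBoundary_le hK (hKv.segment_subset hp hq hz)).trans hz1.2

end ConvexBody

def HasInscribedRightTriangle (C : Set (ℝ × ℝ)) (x : ℝ × ℝ) : Prop :=
  ∃ u ∈ C, ∃ v ∈ C, ∃ w ∈ C, ∃ t : ℝ, t ≠ 0 ∧ u - v = t • x ∧ w.1 = u.1 ∧ w.2 = v.2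

theorem exists_ne_zero_smul_eq_of_mul_eq_mul {p x : ℝ × ℝ} (hp : p ≠ 0) (hx : x ≠ 0)
    (h : p.1 * x.2 = p.2 * x.1) : ∃ t : ℝ, t ≠ 0 ∧ p = t • x := by
  rcases eq_or_ne x.1 0 with hx₁ | hx₁
  · have hx₂ : x.2 ≠ 0 := fun hx₂ => hx (Prod.ext hx₁ hx₂)
    have hp₁ : p.1 = 0 := by simpa [hx₁, hx₂] using h
    refine ⟨p.2 / x.2, div_ne_zero (fun hp₂ => hp (Prod.ext hp₁ hp₂)) hx₂, Prod.ext ?_ ?_⟩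
    · simp [hx₁, hp₁]
    · simp [hx₂]
  · have hp₁ : p.1 ≠ 0 := fun hp₁ => hp (Prod.ext hp₁ (by simpa [hp₁, hx₁] using h.symm))
    refine ⟨p.1 / x.1, div_ne_zero hp₁ hx₁, Prod.ext ?_ ?_⟩
    · simp [hx₁]
    · rw [Prod.smul_snd, smul_eq_mul, div_mul_eq_mul_div, h, mul_div_cancel_right₀ _ hx₁]

namespace HasInscribedRightTriangle

variable {C : Set (ℝ × ℝ)} {x : ℝ × ℝ}

theorem zero {c : ℝ × ℝ} (hc : c ∈ C) : HasInscribedRightTriangle C 0 :=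
  ⟨c, hc, c, hc, c, hc, 1, one_ne_zero, by simp, rfl, rfl⟩

theorem of_neg (h : HasInscribedRightTriangle C (-x)) : HasInscribedRightTriangle C x := by
  obtain ⟨u, hu, v, hv, w, hw, t, ht, huv, h₁, h₂⟩ := h
  exact ⟨u, hu, v, hv, w, hw, -t, neg_ne_zero.2 ht, by rw [huv, smul_neg, neg_smul], h₁, h₂⟩

theorem of_preimage_reflectSnd
    (h : HasInscribedRightTriangle (reflectSnd ⁻¹' C) (reflectSnd x)) :
    HasInscribedRightTriangle C x := by
  obtain ⟨u, hu, v, hv, w, hw, t, ht, huv, h₁, h₂⟩ := h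
  refine ⟨reflectSnd u, hu, reflectSnd v, hv, reflectSnd w, hw, t, ht, ?_,
    by simpa using h₁, by simpa using h₂⟩
  rw [← map_sub, huv, map_smul]
  simp

end HasInscribedRightTriangle

theorem hasInscribedRightTriangle_of_legs {K : Set (ℝ × ℝ)} (hK : IsCompact K) {w x : ℝ × ℝ}
    (hw : w ∈ frontier K) (hx : x ≠ 0)
    (hlegs : leftBoundary K w.2 < w.1 ∨ w.2 < upperBoundary K w.1)
    (hcross : (w.1 - leftBoundary K w.2) * x.2 = (upperBoundary K w.1 - w.2) * x.1) :
    HasInscribedRightTriangle (frontier K) x := by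
  have hwK : (w.1, w.2) ∈ K := hK.isClosed.frontier_subset hw
  have hne : (w.1 - leftBoundary K w.2, upperBoundary K w.1 - w.2) ≠ 0 := by
    simp only [ne_eq, Prod.mk_eq_zero, sub_eq_zero]
    rintro ⟨h₁, h₂⟩
    rcases hlegs with h | h <;> linarith
  obtain ⟨t, ht, hpt⟩ := exists_ne_zero_smul_eq_of_mul_eq_mul hne hx hcross
  refine ⟨_, upperBoundary_mem_frontier hK hwK, _, leftBoundary_mem_frontier hK hwK, w, hw,
    t, ht, ?_, rfl, rfl⟩
  rw [← hpt, Prod.mk_sub_mk]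

def lowerRightArc (K : Set (ℝ × ℝ)) (a₀ ρ : ℝ) : Set (ℝ × ℝ) :=
  (fun a => (a, lowerBoundary K a)) '' Icc a₀ ρ ∪ K ∩ Prod.fst ⁻¹' {ρ}

section LowerRightArc

variable {K : Set (ℝ × ℝ)} {a₀ ρ y₀ y₁ : ℝ}

theorem Icc_subset_image_fst (hKv : Convex ℝ K) (h₀ : (a₀, y₀) ∈ K) (h₁ : (ρ, y₁) ∈ K) :
    Icc a₀ ρ ⊆ Prod.fst '' K :=
  (hKv.linear_image (LinearMap.fst ℝ ℝ ℝ)).ordConnected.out ⟨_, h₀, rfl⟩ ⟨_, h₁, rfl⟩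

theorem isPreconnected_lowerRightArc (hK : IsCompact K) (hKv : Convex ℝ K)
    (h₀ : (a₀, y₀) ∈ K) (h₁ : (ρ, y₁) ∈ K) (hρ : a₀ ≤ ρ) :
    IsPreconnected (lowerRightArc K a₀ ρ) := by
  have hgraph := isPreconnected_Icc.image _
    (continuousOn_id.prodMk ((continuousOn_lowerBoundary hK hKv).mono
      (Icc_subset_image_fst hKv h₀ h₁)))
  have hcolumn : IsPreconnected (K ∩ Prod.fst ⁻¹' {ρ}) :=
    (hKv.inter ((convex_singleton ρ).linear_preimage (LinearMap.fst ℝ ℝ ℝ))).isPreconnected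
  exact hgraph.union (ρ, lowerBoundary K ρ) ⟨ρ, right_mem_Icc.2 hρ, rfl⟩
    ⟨lowerBoundary_mem hK h₁, rfl⟩ hcolumn

theorem lowerRightArc_subset_frontier (hK : IsCompact K) (hKv : Convex ℝ K)
    (h₀ : (a₀, y₀) ∈ K) (h₁ : (ρ, y₁) ∈ K) (hρ : ∀ p ∈ K, p.1 ≤ ρ) :
    lowerRightArc K a₀ ρ ⊆ frontier K := by
  rintro w (⟨a, ha, rfl⟩ | ⟨hwK, hwρ⟩)
  · obtain ⟨p, hp, rfl⟩ := Icc_subset_image_fst hKv h₀ h₁ ha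
    exact lowerBoundary_mem_frontier hK hp
  · exact mem_frontier_of_isMaxOn hK.isClosed (.fst ℝ ℝ ℝ) (d := (1, 0)) (by simp) hwK
      fun p hp => by simpa [show w.1 = ρ from hwρ] using hρ p hp

end LowerRightArc

structure IsAxisExtremes (K : Set (ℝ × ℝ)) (c₁ c₂ c₃ c₄ : ℝ × ℝ) : Prop where
  mem₁ : c₁ ∈ K
  mem₂ : c₂ ∈ K
  mem₃ : c₃ ∈ K
  mem₄ : c₄ ∈ K
  fst_le : ∀ p ∈ K, c₁.1 ≤ p.1
  snd_le : ∀ p ∈ K, c₂.2 ≤ p.2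
  le_fst : ∀ p ∈ K, p.1 ≤ c₃.1
  le_snd : ∀ p ∈ K, p.2 ≤ c₄.2

namespace IsAxisExtremes

variable {K : Set (ℝ × ℝ)} {c₁ c₂ c₃ c₄ : ℝ × ℝ}

theorem preimage_reflectSnd (hc : IsAxisExtremes K c₁ c₂ c₃ c₄) :
    IsAxisExtremes (reflectSnd ⁻¹' K) (reflectSnd c₁) (reflectSnd c₄) (reflectSnd c₃)
      (reflectSnd c₂) where
  mem₁ := by simpa using hc.mem₁
  mem₂ := by simpa using hc.mem₄
  mem₃ := by simpa using hc.mem₃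
  mem₄ := by simpa using hc.mem₂
  fst_le p hp := by simpa using hc.fst_le _ hp
  snd_le p hp := by simpa [neg_le] using hc.le_snd _ hp
  le_fst p hp := by simpa using hc.le_fst _ hp
  le_snd p hp := by simpa [le_neg] using hc.snd_le _ hp

theorem lowerBoundary_leftBoundary (hc : IsAxisExtremes K c₁ c₂ c₃ c₄) (hK : IsCompact K) :
    lowerBoundary K (leftBoundary K c₂.2) = c₂.2 :=
  (lowerBoundary_le hK (leftBoundary_mem hK hc.mem₂)).antisymm
    (hc.snd_le _ (lowerBoundary_mem hK (leftBoundary_mem hK hc.mem₂)))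

theorem leftBoundary_lt (hc : IsAxisExtremes K c₁ c₂ c₃ c₄) (hK : IsCompact K)
    (hKv : Convex ℝ K) (h₂₃ : c₂.1 < c₃.1) (h₄₃ : c₄.1 < c₃.1) {a y : ℝ} (h : (a, y) ∈ K) :
    leftBoundary K y < c₃.1 := by
  have hy : y ∈ segment ℝ c₂.2 c₄.2 := by
    rw [segment_eq_Icc ((hc.snd_le _ h).trans (hc.le_snd _ h))]
    exact ⟨hc.snd_le _ h, hc.le_snd _ h⟩
  exact (leftBoundary_le_max hK hKv hc.mem₂ hc.mem₄ hy).trans_lt (max_lt h₂₃ h₄₃)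

theorem legs_pos_of_mem_lowerRightArc (hc : IsAxisExtremes K c₁ c₂ c₃ c₄) (hK : IsCompact K)
    (hKv : Convex ℝ K) (hKi : (interior K).Nonempty)
    (h₂₁ : c₂.2 < c₁.2) (h₂₃ : c₂.1 < c₃.1) (h₄₃ : c₄.1 < c₃.1) {w : ℝ × ℝ}
    (hw : w ∈ lowerRightArc K (leftBoundary K c₂.2) c₃.1) :
    leftBoundary K w.2 < w.1 ∨ w.2 < upperBoundary K w.1 := by
  have ha₀K := leftBoundary_mem hK hc.mem₂
  rcases hw with ⟨a, ha, rfl⟩ | ⟨hwK, hwρ⟩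
  · rcases ha.2.lt_or_eq with haρ | rfl
    · right
      rcases ((hc.fst_le _ ha₀K).trans ha.1).lt_or_eq with h₁a | rfl
      · exact lowerBoundary_lt_upperBoundary hK hKv hKi hc.mem₁ hc.mem₃ h₁a haρ
      · have h₁ : c₁.1 = leftBoundary K c₂.2 := ha.1.antisymm' (hc.fst_le _ ha₀K)
        have hlow : lowerBoundary K c₁.1 = c₂.2 := h₁ ▸ hc.lowerBoundary_leftBoundary hK
        have hupp : c₁.2 ≤ upperBoundary K c₁.1 := le_upperBoundary hK hc.mem₁
        show lowerBoundary K c₁.1 < upperBoundary K c₁.1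
        linarith
    · exact .inl (hc.leftBoundary_lt hK hKv h₂₃ h₄₃ (lowerBoundary_mem hK hc.mem₃))
  · exact .inl (hwρ ▸ hc.leftBoundary_lt hK hKv h₂₃ h₄₃ hwK)

theorem hasInscribedRightTriangle_of_nonneg (hc : IsAxisExtremes K c₁ c₂ c₃ c₄)
    (hK : IsCompact K) (hKv : Convex ℝ K) (hKi : (interior K).Nonempty)
    (h₂₁ : c₂.2 < c₁.2) (h₂₃ : c₂.1 < c₃.1) (h₄₃ : c₄.1 < c₃.1)
    {x : ℝ × ℝ} (hx : x ≠ 0) (hx₁ : 0 ≤ x.1) (hx₂ : 0 ≤ x.2) :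
    HasInscribedRightTriangle (frontier K) x := by
  set a₀ := leftBoundary K c₂.2 with ha₀
  set ρ := c₃.1
  have ha₀K : (a₀, c₂.2) ∈ K := leftBoundary_mem hK hc.mem₂
  have hρK : (ρ, c₃.2) ∈ K := hc.mem₃
  have ha₀ρ : a₀ ≤ ρ := (leftBoundary_le hK hc.mem₂).trans h₂₃.le
  have harc := lowerRightArc_subset_frontier hK hKv ha₀K hρK hc.le_fst
  set φ : ℝ × ℝ → ℝ := fun w =>
    (w.1 - leftBoundary K w.2) * x.2 - (upperBoundary K w.1 - w.2) * x.1
  have hφ : ContinuousOn φ K := by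
    have hl := (continuousOn_leftBoundary hK hKv).comp continuousOn_snd (mapsTo_image _ K)
    have hu := (continuousOn_upperBoundary hK hKv).comp continuousOn_fst (mapsTo_image _ K)
    exact ((continuousOn_fst.sub hl).mul continuousOn_const).sub
      ((hu.sub continuousOn_snd).mul continuousOn_const)
  have hstart : φ (a₀, lowerBoundary K a₀) ≤ 0 := by
    have := le_upperBoundary hK ha₀K
    simp only [φ]
    rw [hc.lowerBoundary_leftBoundary hK, ← ha₀, sub_self, zero_mul, zero_sub, neg_nonpos]
    exact mul_nonneg (by linarith) hx₁
  have hend : 0 ≤ φ (ρ, upperBoundary K ρ) := by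
    have := leftBoundary_le hK (upperBoundary_mem hK hρK)
    simp only [φ]
    rw [sub_self, zero_mul, sub_zero]
    exact mul_nonneg (by linarith) hx₂
  obtain ⟨w, hw, hφw⟩ := (isPreconnected_lowerRightArc hK hKv ha₀K hρK ha₀ρ).intermediate_value
    (Or.inl ⟨a₀, left_mem_Icc.2 ha₀ρ, rfl⟩) (Or.inr ⟨upperBoundary_mem hK hρK, rfl⟩)
    (hφ.mono fun _ h => hK.isClosed.frontier_subset (harc h)) ⟨hstart, hend⟩
  exact hasInscribedRightTriangle_of_legs hK (harc hw) hx
    (hc.legs_pos_of_mem_lowerRightArc hK hKv hKi h₂₁ h₂₃ h₄₃ hw)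
    (by linarith [show φ w = 0 from hφw])

theorem hasInscribedRightTriangle_of_nonneg_fst (hc : IsAxisExtremes K c₁ c₂ c₃ c₄)
    (hK : IsCompact K) (hKv : Convex ℝ K) (hKi : (interior K).Nonempty)
    (h₂₁ : c₂.2 < c₁.2) (h₁₄ : c₁.2 < c₄.2) (h₂₃ : c₂.1 < c₃.1) (h₄₃ : c₄.1 < c₃.1)
    {x : ℝ × ℝ} (hx : x ≠ 0) (hx₁ : 0 ≤ x.1) :
    HasInscribedRightTriangle (frontier K) x := by
  rcases le_or_gt 0 x.2 with hx₂ | hx₂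
  · exact hc.hasInscribedRightTriangle_of_nonneg hK hKv hKi h₂₁ h₂₃ h₄₃ hx hx₁ hx₂
  have hfr : reflectSnd ⁻¹' frontier K = frontier (reflectSnd ⁻¹' K) :=
    reflectSnd.toHomeomorph.preimage_frontier K
  have hint : reflectSnd ⁻¹' interior K = interior (reflectSnd ⁻¹' K) :=
    reflectSnd.toHomeomorph.preimage_interior K
  refine .of_preimage_reflectSnd (hfr ▸ hc.preimage_reflectSnd.hasInscribedRightTriangle_of_nonneg
    (reflectSnd.toHomeomorph.isCompact_preimage.2 hK)
    (hKv.linear_preimage (reflectSnd : (ℝ × ℝ) →ₗ[ℝ] ℝ × ℝ))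
    (hint ▸ hKi.preimage reflectSnd.surjective)
    (by simpa using h₁₄) h₄₃ h₂₃ (reflectSnd.map_ne_zero_iff.2 hx) hx₁ (by simpa using hx₂.le))

end IsAxisExtremes
theorem stmt6_general (C : Set (ℝ × ℝ))
    (hJordan : ∃ K : Set (ℝ × ℝ), IsCompact K ∧ Convex ℝ K ∧
      (interior K).Nonempty ∧ C = frontier K)
    (c1 c2 c3 c4 : ℝ × ℝ)
    (hc1 : c1 ∈ C) (hc2 : c2 ∈ C) (hc3 : c3 ∈ C) (hc4 : c4 ∈ C)
    (hmin1 : ∀ p ∈ C, c1.1 ≤ p.1) (hmin2 : ∀ p ∈ C, c2.2 ≤ p.2)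
    (hmax1 : ∀ p ∈ C, p.1 ≤ c3.1) (hmax2 : ∀ p ∈ C, p.2 ≤ c4.2)
    (hs2 : c2.2 < c1.2 ∧ c2.2 < c3.2 ∧ c2.2 < c4.2)
    (hs3 : c3.1 > c1.1 ∧ c3.1 > c2.1 ∧ c3.1 > c4.1)
    (hs4 : c4.2 > c1.2 ∧ c4.2 > c2.2 ∧ c4.2 > c3.2) :
    ∀ x : ℝ × ℝ, ∃ u ∈ C, ∃ v ∈ C, ∃ w ∈ C, ∃ t : ℝ, t ≠ 0 ∧
      u - v = t • x ∧ w.1 = u.1 ∧ w.2 = v.2 := by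
  obtain ⟨K, hK, hKv, hKi, rfl⟩ := hJordan
  have hfr := hK.isClosed.frontier_subset
  have hc : IsAxisExtremes K c1 c2 c3 c4 :=
    { mem₁ := hfr hc1, mem₂ := hfr hc2, mem₃ := hfr hc3, mem₄ := hfr hc4
      fst_le := ge_of_forall_mem_frontier_ge hK (.fst ℝ ℝ ℝ) (d := (-1, 0)) (by simp) hmin1
      snd_le := ge_of_forall_mem_frontier_ge hK (.snd ℝ ℝ ℝ) (d := (0, -1)) (by simp) hmin2
      le_fst := le_of_forall_mem_frontier_le hK (.fst ℝ ℝ ℝ) (d := (1, 0)) (by simp) hmax1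
      le_snd := le_of_forall_mem_frontier_le hK (.snd ℝ ℝ ℝ) (d := (0, 1)) (by simp) hmax2 }
  show ∀ x, HasInscribedRightTriangle (frontier K) x
  intro x
  rcases eq_or_ne x 0 with rfl | hx
  · exact .zero hc1
  wlog hx₁ : 0 ≤ x.1 generalizing x
  · exact .of_neg (this (-x) (neg_ne_zero.2 hx) (neg_nonneg.2 (not_le.1 hx₁).le))
  exact hc.hasInscribedRightTriangle_of_nonneg_fst hK hKv hKi hs2.1 hs4.1 hs3.2.1 hs3.2.2 hx hx₁

/-- Lemma `distintos`. Let `C ⊂ ℝ²` be a Jordan curve enclosing a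
convex region (the frontier of a compact convex body) whose four coordinate extreme
points `c¹, c², c³, c⁴` (leftmost, lowest, rightmost, highest) are all distinct, each
being a strict extreme in its direction compared with the other three. Then for every
`x ∈ ℝ²` there are `u, v, w ∈ C` and `t ≠ 0` with `u - v = t • x`, `w` sharing its first
coordinate with `u` and its second coordinate with `v`. -/
theorem stmt6 (C : Set (ℝ × ℝ))
    (hJordan : ∃ K : Set (ℝ × ℝ), IsCompact K ∧ Convex ℝ K ∧
      (interior K).Nonempty ∧ C = frontier K)
    (c1 c2 c3 c4 : ℝ × ℝ)
    (hc1 : c1 ∈ C) (hc2 : c2 ∈ C) (hc3 : c3 ∈ C) (hc4 : c4 ∈ C)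
    (hmin1 : ∀ p ∈ C, c1.1 ≤ p.1) (hmin2 : ∀ p ∈ C, c2.2 ≤ p.2)
    (hmax1 : ∀ p ∈ C, p.1 ≤ c3.1) (hmax2 : ∀ p ∈ C, p.2 ≤ c4.2)
    (hs1 : c1.1 < c2.1 ∧ c1.1 < c3.1 ∧ c1.1 < c4.1)
    (hs2 : c2.2 < c1.2 ∧ c2.2 < c3.2 ∧ c2.2 < c4.2)
    (hs3 : c3.1 > c1.1 ∧ c3.1 > c2.1 ∧ c3.1 > c4.1)
    (hs4 : c4.2 > c1.2 ∧ c4.2 > c2.2 ∧ c4.2 > c3.2) :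
    ∀ x : ℝ × ℝ, ∃ u ∈ C, ∃ v ∈ C, ∃ w ∈ C, ∃ t : ℝ, t ≠ 0 ∧
      u - v = t • x ∧ w.1 = u.1 ∧ w.2 = v.2 :=
  stmt6_general C hJordan c1 c2 c3 c4 hc1 hc2 hc3 hc4 hmin1 hmin2 hmax1 hmax2 hs2 hs3 hs4
end

section
/- Let C ⊂ ℝ² be a convex Jordan curve having a point c that is extreme in two of the four coordinate directions (e.g., c simultaneously attains the maximum first coordinate and maximum second coordinate on C). For a ∈ C define a₁ = a and, for n ≥ 1, let a_{n+1} be the point of C closest to c sharing a coordinate with a_n (choosing the point in the same vertical line in case of ambiguity). Then the sequence (a_n) converges to c, unless a is the strict extreme point of C in the two remaining directions, in which case a_n = a for all n. -/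
/-!
Let `K` be the convex body bounded by `C`. On `C` the ℓ¹-distance to `c` is
`c.1 + c.2 - (p.1 + p.2)`, so each step maximises `p.1 + p.2` over the points of `C` on the
cross (vertical plus horizontal line) through the current term, and since every point of `K` can
be pushed up or right onto `C`, also over the points of `K` on that cross. Hence both coordinates
increase, and the sequence converges to some `L ∈ C`. Chords of `K` from `a 0` show that no point
of `K` on the cross through `L` beats `L`. If `L ≠ c`, such a point is the strict south-west
extreme point of `K`: a point of `K` west of `L`, joined to `c` or to an interior point, would put
`L` in the interior of `K`. Then `a 0 = L` is that extreme point.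
-/

open Filter Topology Set

section LinearLevels

variable {E : Type*} [AddCommGroup E] [Module ℝ E] {K : Set E}

theorem Convex.add_le_of_tendsto_of_forall_level_le (hK : Convex ℝ K) (φ ψ : E →ₗ[ℝ] ℝ)
    {u q : E} (hu : u ∈ K) (hq : q ∈ K) {x : ℕ → ℝ} (hx : Tendsto x atTop (𝓝 (φ q)))
    (hux : ∀ n, φ u ≤ x n) (hxq : ∀ n, x n ≤ φ q) {M : ℝ}
    (hM : ∀ n, ∀ z ∈ K, φ z = x n → φ z + ψ z ≤ M) : φ q + ψ q ≤ M := by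
  -- `q + t n • (u - q)` is the point of the chord `[q, u]` on the level `φ = x n`; when
  -- `φ q = φ u` we get `t n = 0` from division by zero, which is still the right point.
  set t : ℕ → ℝ := fun n => (φ q - x n) / (φ q - φ u)
  have ht : ∀ n, t n ∈ Icc 0 1 := fun n =>
    ⟨div_nonneg (by linarith [hxq n]) (by linarith [hux n, hxq n]),
      div_le_one_of_le₀ (by linarith [hux n]) (by linarith [hux n, hxq n])⟩
  have hφ : ∀ n, φ (q + t n • (u - q)) = x n := fun n => by
    simp only [map_add, map_smul, map_sub, smul_eq_mul]
    rcases eq_or_ne (φ q - φ u) 0 with h | h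
    · have := hux n
      have := hxq n
      simp only [t, h, div_zero, zero_mul]
      linarith
    · linear_combination -div_mul_cancel₀ (φ q - x n) h
  have ht0 : Tendsto t atTop (𝓝 0) := by
    simpa using (hx.const_sub (φ q)).div_const (φ q - φ u)
  have hlim : Tendsto (fun n => x n + ψ (q + t n • (u - q))) atTop (𝓝 (φ q + ψ q)) := by
    simp only [map_add, map_smul, smul_eq_mul]
    simpa using hx.add (tendsto_const_nhds.add (ht0.mul_const (ψ (u - q))))
  refine le_of_tendsto' hlim fun n => ?_
  have := hM n _ (hK.add_smul_sub_mem hq hu (ht n)) (hφ n)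
  rwa [hφ n] at this

theorem Convex.lt_of_lt_of_forall_level_le (hK : Convex ℝ K) (φ ψ : E →ₗ[ℝ] ℝ) {L c p : E}
    (hc : c ∈ K) (hp : p ∈ K) (hc₁ : φ L < φ c) (hc₂ : ψ L < ψ c)
    (hlevel : ∀ q ∈ K, φ q = φ L → ψ q ≤ ψ L) (hpL : φ p < φ L) : ψ p < ψ L := by
  by_contra! h
  set t := (φ L - φ p) / (φ c - φ p)
  have hd : 0 < φ c - φ p := by linarith
  have ht : 0 < t := div_pos (by linarith) hd
  have ht1 : t < 1 := (div_lt_one hd).2 (by linarith)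
  have hz := hlevel _ (hK.add_smul_sub_mem hp hc ⟨ht.le, ht1.le⟩) (by
    simp only [map_add, map_smul, map_sub, smul_eq_mul, t]
    linear_combination div_mul_cancel₀ (φ L - φ p) hd.ne')
  simp only [map_add, map_smul, map_sub, smul_eq_mul] at hz
  nlinarith

end LinearLevels

theorem exists_pos_add_smul_mem_of_mem_interior_s7 {E : Type*} [AddCommGroup E]
    [TopologicalSpace E] [Module ℝ E] [ContinuousAdd E] [ContinuousSMul ℝ E] {K : Set E} {x : E}
    (hx : x ∈ interior K) (v : E) : ∃ ε > (0 : ℝ), x + ε • v ∈ K := by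
  have hlim : Tendsto (fun t : ℝ => x + t • v) (𝓝[>] 0) (𝓝 x) :=
    ((continuous_const.add (continuous_id.smul continuous_const)).tendsto' 0 x
      (by simp)).mono_left nhdsWithin_le_nhds
  obtain ⟨ε, hεK, hε⟩ :=
    ((hlim.eventually (mem_interior_iff_mem_nhds.1 hx)).and self_mem_nhdsWithin).exists
  exact ⟨ε, hε, hεK⟩

theorem Convex.exists_mem_interior_apply_eq {E : Type*} [AddCommGroup E] [TopologicalSpace E]
    [IsTopologicalAddGroup E] [Module ℝ E] [ContinuousSMul ℝ E] {K : Set E} (hK : Convex ℝ K)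
    (φ : E →ₗ[ℝ] ℝ) {w v : E} (hw : w ∈ interior K) (hv : v ∈ K) {x : ℝ}
    (hx : φ v < x ∧ x ≤ φ w ∨ φ w ≤ x ∧ x < φ v) : ∃ z ∈ interior K, φ z = x := by
  have hd : φ w - φ v ≠ 0 := by rcases hx with h | h <;> linarith
  set t := (x - φ v) / (φ w - φ v)
  have ht : t ∈ Ioc 0 1 := by
    rcases hx with h | h
    · exact ⟨div_pos (by linarith) (by linarith), div_le_one_of_le₀ (by linarith) (by linarith)⟩
    · exact ⟨div_pos_of_neg_of_neg (by linarith) (by linarith),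
        (div_le_one_of_neg (by linarith)).2 (by linarith)⟩
  refine ⟨_, hK.add_smul_sub_mem_interior hv hw ht, ?_⟩
  simp only [map_add, map_smul, map_sub, smul_eq_mul, t]
  linear_combination div_mul_cancel₀ (x - φ v) hd

theorem IsCompact.exists_add_smul_mem_frontier {E : Type*} [NormedAddCommGroup E]
    [NormedSpace ℝ E] {K : Set E} (hK : IsCompact K) {p v : E} (hp : p ∈ K) (hv : v ≠ 0) :
    ∃ s ≥ (0 : ℝ), p + s • v ∈ frontier K := by
  set S := {s : ℝ | 0 ≤ s ∧ p + s • v ∈ K}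
  have hS : IsCompact S := by
    obtain ⟨R, hR⟩ := hK.isBounded.subset_closedBall 0
    refine Metric.isCompact_of_isClosed_isBounded
      (isClosed_Ici.inter (hK.isClosed.preimage (by fun_prop))) ?_
    refine (Metric.isBounded_Icc 0 ((R + ‖p‖) / ‖v‖)).subset fun s ⟨hs, hsK⟩ => ⟨hs, ?_⟩
    rw [le_div_iff₀ (norm_pos_iff.2 hv)]
    calc s * ‖v‖ = ‖(p + s • v) - p‖ := by
          rw [add_sub_cancel_left, norm_smul, Real.norm_of_nonneg hs]
      _ ≤ ‖p + s • v‖ + ‖p‖ := norm_sub_le _ _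
      _ ≤ R + ‖p‖ := by gcongr; simpa using hR hsK
  obtain ⟨s, ⟨hs, hsK⟩, hmax⟩ :=
    hS.exists_isMaxOn ⟨0, le_rfl, by simpa using hp⟩ continuous_id.continuousOn
  refine ⟨s, hs, hK.isClosed.frontier_eq ▸ ⟨hsK, fun hint => ?_⟩⟩
  obtain ⟨ε, hε, hεK⟩ := exists_pos_add_smul_mem_of_mem_interior_s7 hint v
  have : s + ε ≤ s := hmax ⟨by positivity, by rwa [add_smul, ← add_assoc]⟩
  linarith

theorem IsCompact.add_le_of_forall_frontier {K : Set (ℝ × ℝ)} (hK : IsCompact K) {x : ℝ × ℝ}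
    {M : ℝ} (h : ∀ q ∈ frontier K, (q.1 = x.1 ∨ q.2 = x.2) → q.1 + q.2 ≤ M) :
    ∀ z ∈ K, (z.1 = x.1 ∨ z.2 = x.2) → z.1 + z.2 ≤ M := by
  rintro z hz (hzx | hzx)
  · obtain ⟨s, hs, hsK⟩ := hK.exists_add_smul_mem_frontier hz (v := (0, 1)) (by simp)
    have := h _ hsK (Or.inl (by simpa using hzx))
    simp only [Prod.fst_add, Prod.snd_add, Prod.smul_mk, smul_eq_mul, mul_zero, mul_one,
      add_zero] at this
    linarith
  · obtain ⟨s, hs, hsK⟩ := hK.exists_add_smul_mem_frontier hz (v := (1, 0)) (by simp)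
    have := h _ hsK (Or.inr (by simpa using hzx))
    simp only [Prod.fst_add, Prod.snd_add, Prod.smul_mk, smul_eq_mul, mul_zero, mul_one,
      add_zero] at this
    linarith

theorem Convex.fst_lt_and_snd_lt_of_cross_le {K : Set (ℝ × ℝ)} (hK : Convex ℝ K)
    (hint : (interior K).Nonempty) {L c : ℝ × ℝ} (hc : c ∈ K) (hLc : L ≤ c) (hne : L ≠ c)
    (hv : ∀ q ∈ K, q.1 = L.1 → q.2 ≤ L.2) (hh : ∀ q ∈ K, q.2 = L.2 → q.1 ≤ L.1) :
    ∀ p ∈ K, p ≠ L → L.1 < p.1 ∧ L.2 < p.2 := by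
  have hc₁ : L.1 < c.1 :=
    hLc.1.lt_of_ne fun h => hne (Prod.ext h (hLc.2.antisymm (hv c hc h.symm)))
  have hc₂ : L.2 < c.2 :=
    hLc.2.lt_of_ne fun h => hne (Prod.ext (hLc.1.antisymm (hh c hc h.symm)) h)
  have hS : ∀ p ∈ K, p.2 < L.2 → p.1 < L.1 := fun p hp =>
    hK.lt_of_lt_of_forall_level_le (.snd ℝ ℝ ℝ) (.fst ℝ ℝ ℝ) hc hp hc₂ hc₁ hh
  have hline : ∀ z ∈ K, z.1 = L.1 → z = L := fun z hz h =>
    Prod.ext h ((hv z hz h).antisymm (not_lt.1 fun h' => (hS z hz h').ne h))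
  have hL : L ∉ interior K := fun hL => by
    obtain ⟨ε, hε, hεK⟩ := exists_pos_add_smul_mem_of_mem_interior_s7 hL (0, 1)
    have := hv _ hεK (by simp only [Prod.smul_mk, smul_eq_mul, mul_zero, mul_one, Prod.fst_add,
      add_zero])
    simp only [Prod.smul_mk, smul_eq_mul, mul_zero, mul_one, Prod.snd_add,
      add_le_iff_nonpos_right] at this
    linarith
  intro p hp hpL
  by_contra hNE
  have hpW : p.1 < L.1 := by
    rcases lt_trichotomy p.1 L.1 with h | h | h
    · exact h
    · exact absurd (hline p hp h) hpL
    · refine absurd ⟨h, ?_⟩ hNE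
      rcases lt_trichotomy p.2 L.2 with h' | h' | h'
      · linarith [hS p hp h']
      · linarith [hh p hp h']
      · exact h'
  obtain ⟨w, hw⟩ := hint
  obtain ⟨z, hz, hzL⟩ : ∃ z ∈ interior K, z.1 = L.1 := by
    rcases le_or_gt w.1 L.1 with h | h
    · exact hK.exists_mem_interior_apply_eq (.fst ℝ ℝ ℝ) hw hc (Or.inr ⟨h, hc₁⟩)
    · exact hK.exists_mem_interior_apply_eq (.fst ℝ ℝ ℝ) hw hp (Or.inl ⟨hpW, h.le⟩)
  exact hL (hline z (interior_subset hz) hzL ▸ hz)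

theorem tendsto_of_forall_cross_le {K : Set (ℝ × ℝ)} (hKc : IsClosed K) (hK : Convex ℝ K)
    (hint : (interior K).Nonempty) {c : ℝ × ℝ} (hc : c ∈ K) (hcmax : ∀ p ∈ frontier K, p ≤ c)
    {a : ℕ → ℝ × ℝ} (ha : ∀ n, a n ∈ frontier K)
    (hshare : ∀ n, (a (n + 1)).1 = (a n).1 ∨ (a (n + 1)).2 = (a n).2)
    (hmax : ∀ n, ∀ z ∈ K, (z.1 = (a n).1 ∨ z.2 = (a n).2) →
      z.1 + z.2 ≤ (a (n + 1)).1 + (a (n + 1)).2)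
    (hnot : ¬ ∀ p ∈ frontier K, p ≠ a 0 → (a 0).1 < p.1 ∧ (a 0).2 < p.2) :
    Tendsto a atTop (𝓝 c) := by
  have haK : ∀ n, a n ∈ K := fun n => hKc.frontier_subset (ha n)
  have hmono : Monotone a := monotone_nat_of_le_succ fun n => by
    have := hmax n (a n) (haK n) (Or.inl rfl)
    rcases hshare n with h | h
    · exact ⟨h.ge, by linarith⟩
    · exact ⟨by linarith, h.ge⟩
  have hbdd₁ : BddAbove (range fun n => (a n).1) :=
    ⟨c.1, forall_mem_range.2 fun n => (hcmax _ (ha n)).1⟩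
  have hbdd₂ : BddAbove (range fun n => (a n).2) :=
    ⟨c.2, forall_mem_range.2 fun n => (hcmax _ (ha n)).2⟩
  set L : ℝ × ℝ := (⨆ n, (a n).1, ⨆ n, (a n).2)
  have hlim : Tendsto a atTop (𝓝 L) :=
    (tendsto_atTop_ciSup (fun _ _ h => (hmono h).1) hbdd₁).prodMk_nhds
      (tendsto_atTop_ciSup (fun _ _ h => (hmono h).2) hbdd₂)
  have haL : ∀ n, a n ≤ L := fun n => ⟨le_ciSup hbdd₁ n, le_ciSup hbdd₂ n⟩
  have hLK : L ∈ frontier K := isClosed_frontier.mem_of_tendsto hlim (.of_forall ha)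
  have hcross : ∀ n, ∀ z ∈ K, (z.1 = (a n).1 ∨ z.2 = (a n).2) → z.1 + z.2 ≤ L.1 + L.2 :=
    fun n z hz h => (hmax n z hz h).trans (add_le_add (haL (n + 1)).1 (haL (n + 1)).2)
  have hv : ∀ q ∈ K, q.1 = L.1 → q.2 ≤ L.2 := fun q hq hqL => by
    have : q.1 + q.2 ≤ L.1 + L.2 :=
      hK.add_le_of_tendsto_of_forall_level_le (.fst ℝ ℝ ℝ) (.snd ℝ ℝ ℝ) (haK 0) hq
        (by simpa only [LinearMap.fst_apply, hqL] using hlim.fst_nhds)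
        (fun n => (hmono n.zero_le).1) (fun n => (haL n).1.trans_eq hqL.symm)
        (fun n z hz h => hcross n z hz (Or.inl h))
    linarith
  have hh : ∀ q ∈ K, q.2 = L.2 → q.1 ≤ L.1 := fun q hq hqL => by
    have : q.2 + q.1 ≤ L.1 + L.2 :=
      hK.add_le_of_tendsto_of_forall_level_le (.snd ℝ ℝ ℝ) (.fst ℝ ℝ ℝ) (haK 0) hq
        (by simpa only [LinearMap.snd_apply, hqL] using hlim.snd_nhds)
        (fun n => (hmono n.zero_le).2) (fun n => (haL n).2.trans_eq hqL.symm)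
        (fun n z hz h => (add_comm z.2 z.1).trans_le (hcross n z hz (Or.inr h)))
    linarith
  suffices L = c from this ▸ hlim
  by_contra hLc
  have hNE := hK.fst_lt_and_snd_lt_of_cross_le hint hc (hcmax L hLK) hLc hv hh
  have ha0 : a 0 = L := by
    by_contra h
    exact absurd (haL 0).1 (not_le.2 (hNE _ (haK 0) h).1)
  obtain ⟨p, hp, hpa, hpNE⟩ : ∃ p ∈ frontier K, p ≠ a 0 ∧ ¬((a 0).1 < p.1 ∧ (a 0).2 < p.2) := by
    simpa using hnot
  exact hpNE (ha0 ▸ hNE p (hKc.frontier_subset hp) (ha0 ▸ hpa))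

theorem abs_sub_add_abs_sub_of_le {p c : ℝ × ℝ} (h : p ≤ c) :
    |p.1 - c.1| + |p.2 - c.2| = c.1 + c.2 - (p.1 + p.2) := by
  rw [abs_of_nonpos (sub_nonpos.2 h.1), abs_of_nonpos (sub_nonpos.2 h.2)]
  ring

/-- Lemma `pincho`. Consider `ℝ²` with the taxicab (ℓ¹) distance and
a convex Jordan curve `C` having a point `c` that is extreme in two coordinate
directions (here: `c` attains both the maximum first and the maximum second coordinate
on `C`). For `a ∈ C` let `(a_n)` be the sequence starting at `a` in which each next term
is a point of `C` closest to `c` (in the ℓ¹ metric) among the points of `C` sharing a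
coordinate with the current term, choosing a point on the same vertical line in case of
ambiguity. Then `(a_n)` converges to `c`, unless `a` is the strict extreme of `C` in the
two remaining directions, in which case the sequence is constantly `a`. -/
theorem stmt7 (C : Set (ℝ × ℝ))
    (hJordan : ∃ K : Set (ℝ × ℝ), IsCompact K ∧ Convex ℝ K ∧
      (interior K).Nonempty ∧ C = frontier K)
    (c : ℝ × ℝ) (hc : c ∈ C)
    (hcorner : (∀ p ∈ C, p.1 ≤ c.1) ∧ (∀ p ∈ C, p.2 ≤ c.2))
    (a : ℕ → ℝ × ℝ) (ha0 : a 0 ∈ C)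
    (hstep : ∀ n : ℕ,
      a (n+1) ∈ C ∧
      ((a (n+1)).1 = (a n).1 ∨ (a (n+1)).2 = (a n).2) ∧
      (∀ q ∈ C, (q.1 = (a n).1 ∨ q.2 = (a n).2) →
        |(a (n+1)).1 - c.1| + |(a (n+1)).2 - c.2| ≤ |q.1 - c.1| + |q.2 - c.2|) ∧
      (∀ q ∈ C, q.1 = (a n).1 →
        |q.1 - c.1| + |q.2 - c.2| = |(a (n+1)).1 - c.1| + |(a (n+1)).2 - c.2| →
        (a (n+1)).1 = (a n).1)) :
    (¬ (∀ p ∈ C, p ≠ a 0 → (a 0).1 < p.1 ∧ (a 0).2 < p.2) →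
        Filter.Tendsto a Filter.atTop (nhds c)) ∧
    ((∀ p ∈ C, p ≠ a 0 → (a 0).1 < p.1 ∧ (a 0).2 < p.2) → ∀ n, a n = a 0) := by
  obtain ⟨K, hK, hKc, hint, rfl⟩ := hJordan
  have hcmax : ∀ p ∈ frontier K, p ≤ c := fun p hp => ⟨hcorner.1 p hp, hcorner.2 p hp⟩
  have ha : ∀ n, a n ∈ frontier K := fun n => n.casesOn ha0 fun m => (hstep m).1
  refine ⟨tendsto_of_forall_cross_le hK.isClosed hKc hint (hK.isClosed.frontier_subset hc) hcmax
    ha (fun n => (hstep n).2.1) (fun n => hK.add_le_of_forall_frontier fun q hq hqa => ?_),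
    fun hext n => ?_⟩
  · have := (hstep n).2.2.1 q hq hqa
    rw [abs_sub_add_abs_sub_of_le (hcmax _ (ha (n + 1))), abs_sub_add_abs_sub_of_le (hcmax q hq)]
      at this
    linarith
  · induction n with
    | zero => rfl
    | succ m ih =>
      by_contra hne
      have := hext _ (hstep m).1 hne
      rcases (hstep m).2.1 with h | h <;> rw [ih] at h <;> linarith [this.1, this.2]
end

section
/- Let X be a strictly convex normed plane whose norm has only finitely many non-differentiability points on S_X, let C_X ⊂ X be a piecewise C¹ Jordan curve enclosing a convex region, and let a ∈ C_X be a point where C_X is differentiable. Define NDif(a) = {b ∈ C_X : t ↦ ‖γ_a(t) − b‖ is not differentiable at t = 0}, where γ_a is the natural parameterization of C_X with γ_a(0) = a. Then NDif(a) consists of at most one line segment (which, if present, has a as an endpoint) together with finitely many isolated points. -/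
/-!
If `b ≠ a` lies in `NDif(a)`, the chain rule shows that the norm is not differentiable at the
direction `(a - b) / ‖a - b‖`, so `b` lies on one of finitely many lines through `a`. A line
through `a` that meets the interior of the convex region meets its boundary in at most two
points. A line that misses the interior supports the region at `a`, hence is the tangent line of
`C` at `a`; but for `b = a + c • γ'(0)` with `c ≠ 0`, `‖γ t - b‖` agrees to first order with
`|t - c| ‖γ'(0)‖`, which is differentiable at `0`. So `NDif(a)` is finite.
-/

/-- `γ` is a natural (arc-length) parameterization of the closed curve `C`, with period
`L`, which is piecewise `C¹`: it has one-sided derivatives of norm one everywhere and is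
differentiable except at the points of a finite set `F ⊆ C`. -/
def IsPiecewiseC1NaturalParam {X : Type*} [NormedAddCommGroup X] [NormedSpace ℝ X]
    (C : Set X) (γ : ℝ → X) (L : ℝ) (F : Set X) : Prop :=
  0 < L ∧ Function.Periodic γ L ∧ Set.range γ = C ∧ Set.InjOn γ (Set.Ico 0 L) ∧
    F.Finite ∧ F ⊆ C ∧
    (∀ t : ℝ, ∃ dp dm : X, ‖dp‖ = 1 ∧ ‖dm‖ = 1 ∧
      HasDerivWithinAt γ dp (Set.Ici t) t ∧ HasDerivWithinAt γ dm (Set.Iic t) t) ∧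
    (∀ t : ℝ, γ t ∉ F → DifferentiableAt ℝ γ t)

open Set Filter Topology Asymptotics Module

theorem HasDerivAt.of_isLittleO_sub {𝕜 F : Type*} [NontriviallyNormedField 𝕜]
    [NormedAddCommGroup F] [NormedSpace 𝕜 F] {f g : 𝕜 → F} {m : F} {x : 𝕜}
    (hg : HasDerivAt g m x) (hfx : f x = g x)
    (hfg : (fun t => f t - g t) =o[𝓝 x] fun t => t - x) : HasDerivAt f m x :=
  hasDerivAt_iff_isLittleO.mpr <| (hfg.add hg.isLittleO).congr_left fun t => by rw [hfx]; abel

theorem exists_smul_eq_of_dual_apply_eq_zero {𝕜 V : Type*} [Field 𝕜] [AddCommGroup V]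
    [Module 𝕜 V] (hdim : finrank 𝕜 V = 2) {f : Dual 𝕜 V} (hf : f ≠ 0) {u d : V}
    (hu : f u = 0) (hd : f d = 0) (hd0 : d ≠ 0) : ∃ c : 𝕜, c • d = u := by
  have : FiniteDimensional 𝕜 V := Module.finite_of_finrank_eq_succ hdim
  have hker : finrank 𝕜 (LinearMap.ker f) = 1 := by
    have := Dual.finrank_ker_add_one_of_ne_zero hf
    omega
  obtain ⟨c, hc⟩ := (finrank_eq_one_iff_of_nonzero' (⟨d, hd⟩ : LinearMap.ker f)
    fun h => hd0 (congrArg Subtype.val h)).mp hker ⟨u, hu⟩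
  exact ⟨c, congrArg Subtype.val hc⟩

section

variable {X : Type*} [NormedAddCommGroup X] [NormedSpace ℝ X]

-- `NDif(γ t₀)` of the paper, with `C` replaced by `S`
def nondiffDistSet (γ : ℝ → X) (t₀ : ℝ) (S : Set X) : Set X :=
  {b ∈ S | ¬ DifferentiableAt ℝ (fun t => ‖γ t - b‖) t₀}

variable {K : Set X} {γ : ℝ → X} {d : X} {t₀ : ℝ}

theorem HasDerivAt.differentiableAt_norm_sub_add_smul {c : ℝ}
    (hγ : HasDerivAt γ d t₀) (hc : c ≠ 0) :
    DifferentiableAt ℝ (fun t => ‖γ t - (γ t₀ + c • d)‖) t₀ := by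
  -- to first order in `t - t₀`, `γ t - (γ t₀ + c • d)` is `(t - t₀ - c) • d`
  set g : ℝ → ℝ := fun t => |t - t₀ - c| * ‖d‖
  have hg : DifferentiableAt ℝ g t₀ :=
    ((differentiableAt_abs (by simpa using hc)).comp t₀
      ((differentiableAt_id.sub_const t₀).sub_const c)).mul_const _
  refine (hg.hasDerivAt.of_isLittleO_sub (by simp [g, norm_smul]) ?_).differentiableAt
  refine (isBigO_of_le _ fun t => ?_).trans_isLittleO hγ.isLittleO
  calc ‖‖γ t - (γ t₀ + c • d)‖ - g t‖
      ≤ ‖γ t - (γ t₀ + c • d) - (t - t₀ - c) • d‖ := by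
        simpa only [g, norm_smul, Real.norm_eq_abs] using
          abs_norm_sub_norm_le (γ t - (γ t₀ + c • d)) ((t - t₀ - c) • d)
    _ = ‖γ t - γ t₀ - (t - t₀) • d‖ := by congr 1; module

theorem not_differentiableAt_norm_normalize {b : X}
    (hγ : DifferentiableAt ℝ γ t₀) (hb : ¬ DifferentiableAt ℝ (fun t => ‖γ t - b‖) t₀) :
    ¬ DifferentiableAt ℝ (fun x : X => ‖x‖) (‖γ t₀ - b‖⁻¹ • (γ t₀ - b)) :=
  fun h => hb <| h.differentiableAt_norm_of_smul.comp t₀ (hγ.sub_const b)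

theorem Convex.subsingleton_setOf_pos_add_smul_mem_frontier (hK : Convex ℝ K)
    {z : X} (hz : z ∈ interior K) (v : X) :
    {s : ℝ | 0 < s ∧ z + s • v ∈ frontier K}.Subsingleton := by
  suffices h : ∀ s₁ s₂ : ℝ, 0 < s₁ → s₁ < s₂ → z + s₂ • v ∈ closure K →
      z + s₁ • v ∈ interior K by
    rintro s₁ ⟨hs₁, h₁⟩ s₂ ⟨hs₂, h₂⟩
    by_contra hne
    rcases lt_or_gt_of_ne hne with hlt | hlt
    · exact h₁.2 (h s₁ s₂ hs₁ hlt (frontier_subset_closure h₂))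
    · exact h₂.2 (h s₂ s₁ hs₂ hlt (frontier_subset_closure h₁))
  intro s₁ s₂ hs₁ hlt hcl
  have hs₂ : 0 < s₂ := hs₁.trans hlt
  convert hK.combo_interior_closure_mem_interior hz hcl (a := 1 - s₁ / s₂) (b := s₁ / s₂)
    (by rw [sub_pos, div_lt_one hs₂]; exact hlt) (by positivity) (by ring) using 1
  rw [smul_add, smul_smul, div_mul_cancel₀ _ hs₂.ne']
  module

theorem Convex.finite_setOf_add_smul_mem_frontier (hK : Convex ℝ K)
    {z : X} (hz : z ∈ interior K) (v : X) :
    {s : ℝ | z + s • v ∈ frontier K}.Finite := by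
  refine ((hK.subsingleton_setOf_pos_add_smul_mem_frontier hz v).finite.union
    (hK.subsingleton_setOf_pos_add_smul_mem_frontier hz (-v)).finite.neg).subset ?_
  intro s hs
  rcases lt_trichotomy s 0 with hneg | rfl | hpos
  · right
    simpa [hneg] using hs
  · exact absurd hz (by simpa using hs.2)
  · exact Or.inl ⟨hpos, hs⟩

theorem Convex.exists_dual_ne_zero_of_line_disjoint_interior (hK : Convex ℝ K)
    (hKint : (interior K).Nonempty) {a u : X} (ha : a ∈ K)
    (hline : ∀ t : ℝ, a + t • u ∉ interior K) :
    ∃ f : StrongDual ℝ X, f ≠ 0 ∧ f u = 0 ∧ ∀ x ∈ K, f x ≤ f a := by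
  have hconv : Convex ℝ (range fun t : ℝ => a + t • u) := by
    have hrange : (range fun t : ℝ => a + t • u) =
        (AffineMap.lineMap a (a + u) : ℝ →ᵃ[ℝ] X) '' univ := by
      rw [image_univ]
      congr 1
      funext t
      rw [AffineMap.lineMap_apply_module', add_sub_cancel_left, add_comm]
    exact hrange ▸ convex_univ.affine_image _
  obtain ⟨f, c, hf0, hfK, hfline⟩ := geometric_hahn_banach_of_nonempty_interior hK hconv
    (disjoint_right.mpr <| by rintro _ ⟨t, rfl⟩; exact hline t) hKint ⟨a, 0, by simp⟩
  have hc : ∀ t : ℝ, c ≤ f a + t * f u := fun t => by simpa using hfline _ ⟨t, rfl⟩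
  have hfa : f a = c := le_antisymm (hfK a ha) (by simpa using hc 0)
  have hfu : f u = 0 := by nlinarith [hc (-f u)]
  exact ⟨f, hf0, hfu, fun x hx => hfa ▸ hfK x hx⟩

theorem finite_nondiffDistSet_inter_line (hdim : finrank ℝ X = 2) (hK : Convex ℝ K)
    (hKint : (interior K).Nonempty) (hγK : ∀ t, γ t ∈ K) (hγ : HasDerivAt γ d t₀) (hd : d ≠ 0)
    (u : X) :
    (nondiffDistSet γ t₀ (frontier K) ∩ range fun s : ℝ => γ t₀ + s • u).Finite := by
  by_cases hmeet : ∃ t : ℝ, γ t₀ + t • u ∈ interior K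
  · obtain ⟨t, ht⟩ := hmeet
    refine ((hK.finite_setOf_add_smul_mem_frontier ht u).image
      fun s => γ t₀ + t • u + s • u).subset ?_
    rintro _ ⟨⟨hb, -⟩, s, rfl⟩
    have hst : γ t₀ + t • u + (s - t) • u = γ t₀ + s • u := by module
    exact ⟨s - t, show _ ∈ frontier K by rwa [hst], hst⟩
  push Not at hmeet
  -- a line through `γ t₀` missing `interior K` supports `K`, so it is the tangent line
  obtain ⟨f, hf0, hfu, hfK⟩ :=
    hK.exists_dual_ne_zero_of_line_disjoint_interior hKint (hγK t₀) hmeet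
  have hfd : f d = 0 :=
    IsLocalMax.hasDerivAt_eq_zero (Eventually.of_forall fun t => hfK _ (hγK t))
      (f.hasFDerivAt.comp_hasDerivAt t₀ hγ)
  obtain ⟨c, rfl⟩ := exists_smul_eq_of_dual_apply_eq_zero hdim (f := (f : X →ₗ[ℝ] ℝ))
    (fun h => hf0 (ContinuousLinearMap.coe_injective h)) hfu hfd hd
  refine (finite_singleton (γ t₀)).subset ?_
  rintro _ ⟨⟨-, hb⟩, s, rfl⟩
  by_contra hne
  have hsc : s * c ≠ 0 := fun h => hne (by simp [smul_smul, h])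
  exact hb (by simpa only [smul_smul] using hγ.differentiableAt_norm_sub_add_smul hsc)

theorem finite_nondiffDistSet (hdim : finrank ℝ X = 2)
    (hND : {u : X | ‖u‖ = 1 ∧ ¬ DifferentiableAt ℝ (fun z : X => ‖z‖) u}.Finite)
    (hK : Convex ℝ K) (hKint : (interior K).Nonempty) (hγK : ∀ t, γ t ∈ K)
    (hγ : HasDerivAt γ d t₀) (hd : d ≠ 0) :
    (nondiffDistSet γ t₀ (frontier K)).Finite := by
  refine ((hND.biUnion fun u _ =>
    finite_nondiffDistSet_inter_line hdim hK hKint hγK hγ hd u).insert (γ t₀)).subset ?_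
  intro b hb
  rcases eq_or_ne b (γ t₀) with rfl | hne
  · exact mem_insert _ _
  have hv : γ t₀ - b ≠ 0 := sub_ne_zero.mpr hne.symm
  refine mem_insert_of_mem _ <| mem_iUnion₂.mpr ⟨‖γ t₀ - b‖⁻¹ • (γ t₀ - b),
    ⟨norm_smul_inv_norm hv, not_differentiableAt_norm_normalize hγ.differentiableAt hb.2⟩,
    hb, -‖γ t₀ - b‖, ?_⟩
  dsimp only
  rw [smul_smul, neg_mul, mul_inv_cancel₀ (norm_ne_zero_iff.mpr hv), neg_one_smul]
  abel

end

theorem stmt12_general {X : Type*} [NormedAddCommGroup X] [NormedSpace ℝ X]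
    (hdim : Module.finrank ℝ X = 2)
    (hND : {u : X | ‖u‖ = 1 ∧ ¬ DifferentiableAt ℝ (fun z : X => ‖z‖) u}.Finite)
    (C : Set X)
    (hconv : ∃ K : Set X, IsCompact K ∧ Convex ℝ K ∧
      (interior K).Nonempty ∧ C = frontier K)
    (γ : ℝ → X) (L : ℝ) (F : Set X)
    (hγ : IsPiecewiseC1NaturalParam C γ L F)
    (a : X)
    (hdiffa : DifferentiableAt ℝ γ 0) :
    ∃ I : Set X, I.Finite ∧
      ({b ∈ C | ¬ DifferentiableAt ℝ (fun t : ℝ => ‖γ t - b‖) 0} = I ∨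
       ∃ e : X, e ≠ a ∧
        {b ∈ C | ¬ DifferentiableAt ℝ (fun t : ℝ => ‖γ t - b‖) 0} =
          segment ℝ a e ∪ I) := by
  obtain ⟨K, hKcomp, hKconv, hKint, rfl⟩ := hconv
  obtain ⟨-, -, hrange, -, -, -, hunit, -⟩ := hγ
  obtain ⟨dp, -, hdp, -, hγdp, -⟩ := hunit 0
  have hd : deriv γ 0 = dp :=
    (uniqueDiffWithinAt_Ici 0).eq_deriv _ hdiffa.hasDerivAt.hasDerivWithinAt hγdp
  have hγK : ∀ t, γ t ∈ K := fun t =>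
    hKcomp.isClosed.frontier_subset (hrange ▸ mem_range_self t)
  refine ⟨_, finite_nondiffDistSet hdim hND hKconv hKint hγK hdiffa.hasDerivAt ?_, Or.inl rfl⟩
  rw [hd, ← norm_ne_zero_iff, hdp]
  exact one_ne_zero

/-- Let `X` be a strictly convex normed plane whose norm has only
finitely many non-differentiability points on the unit sphere, let `C` be a piecewise
`C¹` Jordan curve enclosing a convex region, and let `a ∈ C` be a point where `C` is
differentiable, with natural parameterization `γ`, `γ 0 = a`. Then the set
`NDif a = {b ∈ C : t ↦ ‖γ t - b‖ is not differentiable at 0}` consists of at most one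
line segment (which, if present, has `a` as an endpoint) together with a finite set of
points. -/
theorem stmt12 {X : Type*} [NormedAddCommGroup X] [NormedSpace ℝ X]
    [StrictConvexSpace ℝ X] (hdim : Module.finrank ℝ X = 2)
    (hND : {u : X | ‖u‖ = 1 ∧ ¬ DifferentiableAt ℝ (fun z : X => ‖z‖) u}.Finite)
    (C : Set X)
    (hconv : ∃ K : Set X, IsCompact K ∧ Convex ℝ K ∧
      (interior K).Nonempty ∧ C = frontier K)
    (γ : ℝ → X) (L : ℝ) (F : Set X)
    (hγ : IsPiecewiseC1NaturalParam C γ L F)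
    (a : X) (ha : a ∈ C) (hγ0 : γ 0 = a)
    (hdiffa : DifferentiableAt ℝ γ 0) :
    ∃ I : Set X, I.Finite ∧
      ({b ∈ C | ¬ DifferentiableAt ℝ (fun t : ℝ => ‖γ t - b‖) 0} = I ∨
       ∃ e : X, e ≠ a ∧
        {b ∈ C | ¬ DifferentiableAt ℝ (fun t : ℝ => ‖γ t - b‖) 0} =
          segment ℝ a e ∪ I) :=
  stmt12_general hdim hND C hconv γ L F hγ a hdiffa
end

section
/- Let X be a strictly convex normed plane, C_X ⊂ X a piecewise C¹ Jordan curve enclosing a convex region, and a ∈ C_X a point where C_X is NOT differentiable. Then for every b ∈ C_X such that (a − b)/‖a − b‖ is a differentiability point of the norm of X, the function t ↦ ‖γ_a(t) − b‖ fails to be differentiable at t = 0. -/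
/-!
If `t ↦ ‖γ t - b‖` were differentiable at `0`, the derivative `φ` of the norm at `a - b` would
take the same value on the one-sided tangents `dp ≠ dm` of the curve at `a`. By strict convexity
the point of the line through `dp` and `dm` that lies on `ℝ (a - b)` is then in the open unit
ball, so a functional `ω` vanishing on `a - b` separates them strictly: `ω dm < 0 < ω dp`.
Hence `ω ∘ γ` has a strict local minimum at `0`: near `a`, the boundary of `K` lies strictly
above the level line `ω = ω a`, except at `a` itself. But this level line contains the chord
`[a, b] ⊆ K`, and a point of the chord close to `a` is either a boundary point, or an interior
point, and then pushing the chord slightly below the level line produces boundary points there.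
-/

open Set Filter Topology

theorem IsPreconnected.inter_frontier_nonempty {α : Type*} [TopologicalSpace α] {s t : Set α}
    (hs : IsPreconnected s) (hst : (s ∩ t).Nonempty) (hst' : (s \ t).Nonempty) :
    (s ∩ frontier t).Nonempty := by
  by_contra h
  have hsub : s ⊆ interior t ∪ (closure t)ᶜ := fun x hx => by
    by_contra hx'
    simp only [mem_union, mem_compl_iff, not_or, not_not] at hx'
    exact h ⟨x, hx, hx'.2, hx'.1⟩
  obtain ⟨x, hxs, hxt⟩ := hst
  obtain ⟨y, hys, hyt⟩ := hst'
  obtain ⟨z, -, hz, hz'⟩ := hs _ _ isOpen_interior isClosed_closure.isOpen_compl hsub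
    ⟨x, hxs, (hsub hxs).resolve_right (not_not.2 (subset_closure hxt))⟩
    ⟨y, hys, (hsub hys).resolve_left fun hy => hyt (interior_subset hy)⟩
  exact hz' (subset_closure (interior_subset hz))

theorem eventually_lt_of_hasDerivWithinAt_Iic_Ici {f : ℝ → ℝ} {x l r : ℝ}
    (hl : HasDerivWithinAt f l (Iic x) x) (hl0 : l < 0)
    (hr : HasDerivWithinAt f r (Ici x) x) (hr0 : 0 < r) :
    ∀ᶠ t in 𝓝[≠] x, f x < f t := by
  rw [← nhdsLT_sup_nhdsGT, eventually_sup]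
  constructor
  · have hslope := (hasDerivWithinAt_iff_tendsto_slope' self_notMem_Iio).1 hl.Iio_of_Iic
    filter_upwards [hslope.eventually (gt_mem_nhds hl0), self_mem_nhdsWithin] with t ht hxt
    rwa [slope_comm, slope_neg_iff_of_le hxt.le] at ht
  · have hslope := (hasDerivWithinAt_iff_tendsto_slope' self_notMem_Ioi).1 hr.Ioi_of_Ici
    filter_upwards [hslope.eventually (lt_mem_nhds hr0), self_mem_nhdsWithin] with t ht hxt
    exact (slope_pos_iff hxt).1 ht

theorem eq_of_hasDerivWithinAt_Iic_Ici {F : Type*} [NormedAddCommGroup F] [NormedSpace ℝ F]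
    {f : ℝ → F} {x : ℝ} {l r : F} (hf : DifferentiableAt ℝ f x)
    (hl : HasDerivWithinAt f l (Iic x) x) (hr : HasDerivWithinAt f r (Ici x) x) : l = r :=
  ((uniqueDiffOn_Iic x x self_mem_Iic).eq_deriv _ hl hf.hasDerivAt.hasDerivWithinAt).trans
    ((uniqueDiffOn_Ici x x self_mem_Ici).eq_deriv _ hf.hasDerivAt.hasDerivWithinAt hr)

theorem Function.Periodic.eq_zero_of_apply_eq {β : Type*} {γ : ℝ → β} {L t : ℝ}
    (hper : Function.Periodic γ L) (hinj : InjOn γ (Ico 0 L)) (ht : t ∈ Ioo (-L) L)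
    (hγt : γ t = γ 0) : t = 0 := by
  have hL : 0 < L := by linarith [ht.1, ht.2]
  rcases lt_or_ge t 0 with h | h
  · have := hinj ⟨by linarith [ht.1], by linarith⟩ ⟨le_rfl, hL⟩ ((hper t).trans hγt)
    linarith [ht.1]
  · exact hinj ⟨h, ht.2⟩ ⟨le_rfl, hL⟩ hγt

theorem Function.Periodic.eventually_nhdsWithin_range_diff {β : Type*} [TopologicalSpace β]
    [T2Space β] {γ : ℝ → β} {L : ℝ} (hper : Function.Periodic γ L) (hL : 0 < L)
    (hinj : InjOn γ (Ico 0 L)) (hγ : Continuous γ) {P : β → Prop}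
    (hP : ∀ᶠ t in 𝓝[≠] 0, P (γ t)) : ∀ᶠ x in 𝓝[range γ \ {γ 0}] γ 0, P x := by
  obtain ⟨U, hUo, hU0, hUP⟩ := mem_nhdsWithin.1 hP
  have hA : IsCompact (Icc (-(L / 2)) (L / 2) \ U) := isCompact_Icc.diff hUo
  have h0A : γ 0 ∉ γ '' (Icc (-(L / 2)) (L / 2) \ U) := by
    rintro ⟨t, ⟨ht, htU⟩, hγt⟩
    have : t = 0 := hper.eq_zero_of_apply_eq hinj ⟨by linarith [ht.1], by linarith [ht.2]⟩ hγt
    exact htU (this ▸ hU0)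
  filter_upwards [nhdsWithin_le_nhds ((hA.image hγ).isClosed.isOpen_compl.mem_nhds h0A),
    self_mem_nhdsWithin] with x hxA hx
  obtain ⟨⟨s, rfl⟩, hs0⟩ := hx
  obtain ⟨t, ht, hst⟩ := hper.exists_mem_Ico hL s (-(L / 2))
  rw [hst] at hxA hs0 ⊢
  have htU : t ∈ U := by
    by_contra htU
    exact hxA ⟨t, ⟨⟨ht.1, by linarith [ht.2]⟩, htU⟩, rfl⟩
  exact hUP ⟨htU, fun h0 => hs0 (congrArg γ h0)⟩

section NormedSpace

variable {E : Type*} [NormedAddCommGroup E] [NormedSpace ℝ E]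

theorem Convex.frequently_le_of_mem_frontier {K : Set E} (hK : Convex ℝ K) (hKc : IsClosed K)
    {a b : E} (ha : a ∈ frontier K) (hb : b ∈ K) (hba : b ≠ a) {ω : E →L[ℝ] ℝ} (hω : ω ≠ 0)
    (hωb : ω b = ω a) : ∃ᶠ x in 𝓝[frontier K \ {a}] a, ω x ≤ ω a := by
  obtain ⟨w, hw⟩ : ∃ w, ω w = 1 := by
    obtain ⟨v, hv⟩ := DFunLike.ne_iff.1 hω
    exact ⟨(ω v)⁻¹ • v, by simp [inv_mul_cancel₀ hv]⟩
  have hmove : ∀ p v : E, Tendsto (fun s : ℝ => p + s • v) (𝓝 0) (𝓝 p) := fun p v => by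
    simpa using (tendsto_const_nhds (x := p)).add ((tendsto_id (x := 𝓝 (0 : ℝ))).smul_const v)
  rw [frequently_nhdsWithin_iff, Metric.nhds_basis_ball.frequently_iff]
  intro ρ hρ
  have hr : ∀ᶠ r in 𝓝[>] (0 : ℝ), r < 1 ∧ a + r • (b - a) ∈ Metric.ball a ρ :=
    nhdsWithin_le_nhds <| (eventually_lt_nhds one_pos).and
      ((hmove a (b - a)).eventually (Metric.ball_mem_nhds a hρ))
  obtain ⟨r, ⟨hr1, hqρ⟩, hr0 : 0 < r⟩ := (hr.and self_mem_nhdsWithin).exists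
  set q := a + r • (b - a)
  set y := a - r • (b - a)
  have hqK : q ∈ K := hK.add_smul_sub_mem (hKc.frontier_subset ha) hb ⟨hr0.le, hr1.le⟩
  have hωq : ω q = ω a := by simp [q, hωb]
  have hqa : q ≠ a := fun h =>
    smul_ne_zero hr0.ne' (sub_ne_zero.2 hba) (add_eq_left.1 h)
  by_cases hqfr : q ∈ frontier K
  · exact ⟨q, hqρ, hωq.le, hqfr, hqa⟩
  have hqi : q ∈ interior K := by
    by_contra h
    exact hqfr (hKc.frontier_eq ▸ ⟨hqK, h⟩)
  -- `a` is the midpoint of `q` and `y`, so `y ∈ K` would put `a` in the interior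
  have hyK : y ∉ K := fun hy => ha.2 <| by
    convert hK.combo_interior_self_mem_interior hqi hy one_half_pos one_half_pos.le
      (add_halves 1) using 1
    module
  have hyρ : y ∈ Metric.ball a ρ := by
    rw [Metric.mem_ball, dist_eq_norm] at hqρ ⊢
    simpa [q, y] using hqρ
  -- moving `q` and `y` slightly in the direction `-w` keeps `q` inside and `y` outside `K`,
  -- so the segment between them meets `frontier K` strictly below the level `ω a`
  have hs : ∀ᶠ s in 𝓝[>] (0 : ℝ), (q + s • -w ∈ interior K ∧ y + s • -w ∈ Kᶜ) ∧
      q + s • -w ∈ Metric.ball a ρ ∧ y + s • -w ∈ Metric.ball a ρ :=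
    nhdsWithin_le_nhds <|
      (((hmove q (-w)).eventually (isOpen_interior.mem_nhds hqi)).and
        ((hmove y (-w)).eventually (hKc.isOpen_compl.mem_nhds hyK))).and
      (((hmove q (-w)).eventually (Metric.isOpen_ball.mem_nhds hqρ)).and
        ((hmove y (-w)).eventually (Metric.isOpen_ball.mem_nhds hyρ)))
  obtain ⟨s, ⟨⟨hq'K, hy'K⟩, hq'ρ, hy'ρ⟩, hs0 : 0 < s⟩ := (hs.and self_mem_nhdsWithin).exists
  have hconv : Convex ℝ (Metric.ball a ρ ∩ {x | ω x < ω a}) :=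
    (convex_ball a ρ).inter (convex_halfSpace_lt ω.toLinearMap.isLinear _)
  have hωshift : ∀ p, ω p = ω a → ω (p + s • -w) < ω a := fun p hp => by
    simp [hp, hw, hs0]
  have hsub := hconv.segment_subset ⟨hq'ρ, hωshift q hωq⟩
    ⟨hy'ρ, hωshift y (by simp [y, hωb])⟩
  obtain ⟨z, hzseg, hzK⟩ := (convex_segment _ _).isPreconnected.inter_frontier_nonempty
    ⟨_, left_mem_segment ℝ _ _, interior_subset hq'K⟩ ⟨_, right_mem_segment ℝ _ _, hy'K⟩
  obtain ⟨hzρ, hωz⟩ := hsub hzseg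
  exact ⟨z, hzρ, hωz.le, hzK, ne_of_apply_ne ω hωz.ne⟩

theorem exists_ker_eq_span_singleton_of_finrank_eq_two (hdim : Module.finrank ℝ E = 2)
    {u w : E} (hu : u ≠ 0) (hw : w ∉ ℝ ∙ u) :
    ∃ ω : E →L[ℝ] ℝ, LinearMap.ker (ω : E →ₗ[ℝ] ℝ) = ℝ ∙ u ∧ ω w = 1 := by
  have : FiniteDimensional ℝ E := .of_finrank_pos (by omega)
  obtain ⟨f, hfw, hle⟩ := Submodule.exists_le_ker_of_notMem hw
  have hrange : Module.finrank ℝ (LinearMap.range f) = 1 := by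
    rw [LinearMap.range_eq_top.2 (LinearMap.surjective_of_ne_zero fun h => hfw (by simp [h])),
      finrank_top, Module.finrank_self]
  have hker : ℝ ∙ u = LinearMap.ker f := Submodule.eq_of_le_of_finrank_le hle <| by
    have := f.finrank_range_add_finrank_ker
    rw [finrank_span_singleton hu]
    omega
  refine ⟨LinearMap.toContinuousLinearMap ((f w)⁻¹ • f), ?_, by simp [hfw]⟩
  ext x
  simp [hker, hfw]

theorem DifferentiableAt.abs_fderiv_norm_apply_of_mem_span {v x : E}
    (hv : DifferentiableAt ℝ (‖·‖) v) (hx : x ∈ ℝ ∙ v) : |fderiv ℝ (‖·‖) v x| = ‖x‖ := by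
  obtain ⟨α, rfl⟩ := Submodule.mem_span_singleton.1 hx
  rw [map_smul, hv.fderiv_norm_self, smul_eq_mul, abs_mul, abs_norm, norm_smul, Real.norm_eq_abs]

theorem abs_apply_lt_one_of_apply_eq [StrictConvexSpace ℝ E] {φ : E →L[ℝ] ℝ} (hφ : ‖φ‖ ≤ 1)
    {x y : E} (hx : ‖x‖ = 1) (hy : ‖y‖ = 1) (hxy : x ≠ y) (h : φ x = φ y) : |φ x| < 1 := by
  have hsum : ‖x + y‖ < 2 := by
    have := norm_add_lt_of_not_sameRay fun h' => hxy (h'.eq_of_norm_eq (hx.trans hy.symm))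
    rwa [hx, hy, one_add_one_eq_two] at this
  have : 2 * |φ x| < 2 := calc
    2 * |φ x| = ‖φ (x + y)‖ := by rw [map_add, ← h, ← two_mul, Real.norm_eq_abs, abs_mul, abs_two]
    _ ≤ ‖φ‖ * ‖x + y‖ := φ.le_opNorm _
    _ ≤ ‖x + y‖ := mul_le_of_le_one_left (norm_nonneg _) hφ
    _ < 2 := hsum
  linarith

theorem pos_of_norm_lineMap_lt {x y : E} {s : ℝ} (hy : ‖y‖ ≤ ‖x‖)
    (hs : ‖AffineMap.lineMap x y s‖ < ‖x‖) : 0 < s := by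
  by_contra! hs0
  rw [AffineMap.lineMap_apply_module] at hs
  have : (1 - s) * ‖x‖ < ‖x‖ + -s * ‖x‖ := calc
    (1 - s) * ‖x‖ = ‖(1 - s) • x‖ := by rw [norm_smul, Real.norm_of_nonneg (by linarith)]
    _ = ‖((1 - s) • x + s • y) + (-s) • y‖ := by congr 1; module
    _ ≤ ‖(1 - s) • x + s • y‖ + ‖(-s) • y‖ := norm_add_le _ _
    _ < ‖x‖ + -s * ‖x‖ := by
      rw [norm_smul, Real.norm_of_nonneg (by linarith)]
      exact add_lt_add_of_lt_of_le hs (mul_le_mul_of_nonneg_left hy (by linarith))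
  linarith

theorem mem_Ioo_of_norm_lineMap_lt {x y : E} {s : ℝ} (hxy : ‖x‖ = ‖y‖)
    (hs : ‖AffineMap.lineMap x y s‖ < ‖x‖) : s ∈ Ioo 0 1 :=
  ⟨pos_of_norm_lineMap_lt hxy.ge hs, sub_pos.1 <| pos_of_norm_lineMap_lt hxy.le <| by
    rwa [AffineMap.lineMap_apply_one_sub, ← hxy]⟩

theorem exists_separating_dual_of_fderiv_norm_apply_eq [StrictConvexSpace ℝ E]
    (hdim : Module.finrank ℝ E = 2) {v x y : E} (hv : DifferentiableAt ℝ (‖·‖) v)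
    (hx : ‖x‖ = 1) (hy : ‖y‖ = 1) (hxy : x ≠ y)
    (h : fderiv ℝ (‖·‖) v x = fderiv ℝ (‖·‖) v y) :
    ∃ ω : E →L[ℝ] ℝ, ω v = 0 ∧ 0 < ω x ∧ ω y < 0 := by
  have : Nontrivial E := Module.nontrivial_of_finrank_pos (R := ℝ) (by omega)
  have hv0 : v ≠ 0 := fun h0 => not_differentiableAt_norm_zero E (h0 ▸ hv)
  set φ := fderiv ℝ (‖·‖) v
  have hxy' : x - y ∉ ℝ ∙ v := fun hmem => hxy <| sub_eq_zero.1 <| norm_eq_zero.1 <| by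
    rw [← hv.abs_fderiv_norm_apply_of_mem_span hmem, map_sub, h, sub_self, abs_zero]
  obtain ⟨ω, hker, hω⟩ := exists_ker_eq_span_singleton_of_finrank_eq_two hdim hv0 hxy'
  have hωy : ω y = ω x - 1 := by rw [map_sub] at hω; linarith
  -- the point of the line through `x` and `y` lying on `ker ω = ℝ ∙ v` has norm `|φ x| < 1`
  have hline : ‖AffineMap.lineMap x y (ω x)‖ < ‖x‖ := by
    have hmem : AffineMap.lineMap x y (ω x) ∈ ℝ ∙ v := by
      rw [← hker, LinearMap.mem_ker, AffineMap.lineMap_apply_module]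
      simp [hωy]
      ring
    have hφ1 : ‖φ‖ ≤ 1 := by
      simpa using norm_fderiv_le_of_lipschitz ℝ (lipschitzWith_one_norm (E := E)) (x₀ := v)
    rw [← hv.abs_fderiv_norm_apply_of_mem_span hmem, AffineMap.lineMap_apply_module, map_add,
      map_smul, map_smul, ← h, smul_eq_mul, smul_eq_mul, ← add_mul, sub_add_cancel, one_mul, hx]
    exact abs_apply_lt_one_of_apply_eq hφ1 hx hy hxy h
  obtain ⟨h0, h1⟩ := mem_Ioo_of_norm_lineMap_lt (hx.trans hy.symm) hline
  exact ⟨ω, LinearMap.mem_ker.1 (hker ▸ Submodule.mem_span_singleton_self v), h0, by linarith⟩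

end NormedSpace

/-- Let `X` be a strictly convex normed plane, `C` a piecewise `C¹`
Jordan curve enclosing a convex region, and `a ∈ C` a point where `C` is *not*
differentiable (the one-sided derivatives of the natural parameterization `γ`, with
`γ 0 = a`, differ at `0`). Then for every `b ∈ C` such that `(a - b)/‖a - b‖` is a
differentiability point of the norm, the function `t ↦ ‖γ t - b‖` fails to be
differentiable at `t = 0`. -/
theorem stmt13 {X : Type*} [NormedAddCommGroup X] [NormedSpace ℝ X]
    [StrictConvexSpace ℝ X] (hdim : Module.finrank ℝ X = 2)
    (C : Set X)
    (hconv : ∃ K : Set X, IsCompact K ∧ Convex ℝ K ∧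
      (interior K).Nonempty ∧ C = frontier K)
    (γ : ℝ → X) (L : ℝ) (F : Set X)
    (hγ : IsPiecewiseC1NaturalParam C γ L F)
    (a : X) (ha : a ∈ C) (hγ0 : γ 0 = a)
    (hnd : ∀ dp dm : X, HasDerivWithinAt γ dp (Set.Ici 0) 0 →
      HasDerivWithinAt γ dm (Set.Iic 0) 0 → dp ≠ dm) :
    ∀ b ∈ C, b ≠ a →
      DifferentiableAt ℝ (fun z : X => ‖z‖) (‖a - b‖⁻¹ • (a - b)) →
      ¬ DifferentiableAt ℝ (fun t : ℝ => ‖γ t - b‖) 0 := by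
  obtain ⟨K, hKc, hK, -, rfl⟩ := hconv
  obtain ⟨hL, hper, hrange, hinj, -, -, hderivs, -⟩ := hγ
  intro b hb hba hnorm hdist
  obtain ⟨dp, dm, hdp, hdm, hγp, hγm⟩ := hderivs 0
  have hγc : Continuous γ := continuous_iff_continuousAt.2 fun t => by
    obtain ⟨_, _, -, -, hp, hm⟩ := hderivs t
    exact continuousAt_iff_continuous_left_right.2 ⟨hm.continuousWithinAt, hp.continuousWithinAt⟩
  have hN := hnorm.differentiableAt_norm_of_smul.hasFDerivAt
  have hφ : fderiv ℝ (‖·‖) (a - b) dp = fderiv ℝ (‖·‖) (a - b) dm := by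
    refine (eq_of_hasDerivWithinAt_Iic_Ici hdist ?_ ?_).symm
    · exact hN.comp_hasDerivWithinAt_of_eq 0 (hγm.sub_const b) (by rw [hγ0])
    · exact hN.comp_hasDerivWithinAt_of_eq 0 (hγp.sub_const b) (by rw [hγ0])
  obtain ⟨ω, hωab, hωdp, hωdm⟩ := exists_separating_dual_of_fderiv_norm_apply_eq hdim
    hN.differentiableAt hdp hdm (hnd dp dm hγp hγm) hφ
  have hloc : ∀ᶠ t in 𝓝[≠] 0, ω (γ 0) < ω (γ t) := eventually_lt_of_hasDerivWithinAt_Iic_Ici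
    (ω.hasFDerivAt.comp_hasDerivWithinAt 0 hγm) hωdm
    (ω.hasFDerivAt.comp_hasDerivWithinAt 0 hγp) hωdp
  have hev := hper.eventually_nhdsWithin_range_diff (P := (ω (γ 0) < ω ·)) hL hinj hγc hloc
  rw [hrange, hγ0] at hev
  have hω0 : ω ≠ 0 := fun h => by simp [h] at hωdp
  have hωb : ω b = ω a := (sub_eq_zero.1 (by rwa [map_sub] at hωab)).symm
  obtain ⟨x, hx, hx'⟩ := ((hK.frequently_le_of_mem_frontier hKc.isClosed ha
    (hKc.isClosed.frontier_subset hb) hba hω0 hωb).and_eventually hev).exists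
  exact hx.not_gt hx'
end

section
/- Let X be a strictly convex normed plane and let τ : C_X → C_X be an isometry of a convex Jordan curve C_X ⊂ X = ℝ² onto itself such that τ(a) − τ(b) = a − b whenever a, b ∈ C_X lie on a common horizontal or vertical line. Suppose a, b ∈ C_X and there exist points a^{i₁}, a^{i₂}, a^{i₃}, a^{i₄} in the orbit of a under the 'reflection along coordinate lines' process and b^{j₁}, b^{j₂}, b^{j₃}, b^{j₄} in the corresponding orbit of b such that a^{i_k} − b^{j_k} lies in the (open) k-th quadrant for k = 1,2,3,4. Then τ(a) − τ(b) = a − b. -/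
/-!
Suppose `w := (τ a - τ b) - (a - b) ≠ 0`. Each step of an orbit stays on a coordinate line, so
`τ x - x` is constant along the orbits of `a` and of `b`, and the isometry property gives
`N (A i - B j + w) = N (A i - B j)` for all `i, j`.

In a strictly convex plane pick `d` Birkhoff-orthogonal to `w`, i.e. `N d ≤ N (d + t • w)` for
all `t`. Along every line `s • d + ℝ • w` with `s ≠ 0` the norm is strictly convex with its
minimum at `s • d`, hence strictly increasing in the direction of `w`; so `N u < N (u + w)` on the
closed half-plane `{s • d + t • w | t ≥ 0}`. Such a half-plane contains one of the four open
quadrants, and with it one of the differences `A iₖ - B jₖ`, a contradiction.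
-/

open Set Filter Module

structure IsStrictConvexNorm {E : Type*} [AddCommGroup E] [Module ℝ E] (N : E → ℝ) : Prop where
  eq_zero_iff : ∀ p, N p = 0 ↔ p = 0
  smul : ∀ (r : ℝ) (p), N (r • p) = |r| * N p
  add_le : ∀ p q, N (p + q) ≤ N p + N q
  eq_smul_of_add_eq : ∀ p q, p ≠ 0 → q ≠ 0 → N (p + q) = N p + N q → ∃ r > (0:ℝ), q = r • p

lemma StrictConvexOn.strictMonoOn_Ici_of_forall_le {g : ℝ → ℝ} (hg : StrictConvexOn ℝ univ g)
    (hmin : ∀ t, g 0 ≤ g t) : StrictMonoOn g (Ici 0) := by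
  have key : ∀ {x y : ℝ}, 0 < x → x < y → g x < g y := by
    intro x y hx hxy
    have hslope := hg.slope_strict_mono_adjacent (mem_univ 0) (mem_univ y) hx hxy
    have : 0 ≤ (g x - g 0) / (x - 0) := div_nonneg (sub_nonneg.2 (hmin x)) (by linarith)
    have := (div_pos_iff_of_pos_right (sub_pos.2 hxy)).1 (this.trans_lt hslope)
    linarith
  intro x (hx : 0 ≤ x) y _ hxy
  rcases hx.eq_or_lt with rfl | hx
  · exact (hmin (y / 2)).trans_lt (key (by linarith) (by linarith))
  · exact key hx hxy

namespace IsStrictConvexNorm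

variable {E : Type*} [AddCommGroup E] [Module ℝ E] {N : E → ℝ}

lemma map_zero (hN : IsStrictConvexNorm N) : N 0 = 0 := (hN.eq_zero_iff 0).2 rfl

lemma map_neg (hN : IsStrictConvexNorm N) (p : E) : N (-p) = N p := by
  rw [← neg_one_smul ℝ p, hN.smul, abs_neg, abs_one, one_mul]

lemma nonneg (hN : IsStrictConvexNorm N) (p : E) : 0 ≤ N p := by
  have := hN.add_le p (-p)
  rw [add_neg_cancel, hN.map_zero, hN.map_neg] at this
  linarith

lemma pos (hN : IsStrictConvexNorm N) {p : E} (hp : p ≠ 0) : 0 < N p :=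
  (hN.nonneg p).lt_of_ne fun h => hp ((hN.eq_zero_iff p).1 h.symm)

lemma strictConvexOn_line (hN : IsStrictConvexNorm N) {v x : E}
    (hvx : LinearIndependent ℝ ![v, x]) : StrictConvexOn ℝ univ fun t : ℝ => N (x + t • v) := by
  have hline : ∀ t : ℝ, x + t • v ≠ 0 := fun t h =>
    one_ne_zero (LinearIndependent.pair_iff.1 hvx t 1 (by rw [← h]; module)).2
  refine ⟨convex_univ, fun t _ t' _ htt' a b ha hb hab => ?_⟩
  have hcomb : x + (a * t + b * t') • v = a • (x + t • v) + b • (x + t' • v) := by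
    match_scalars <;> linarith
  have hsplit : N (a • (x + t • v)) + N (b • (x + t' • v))
      = a * N (x + t • v) + b * N (x + t' • v) := by
    rw [hN.smul, hN.smul, abs_of_pos ha, abs_of_pos hb]
  simp only [smul_eq_mul]
  rw [hcomb, ← hsplit]
  refine (hN.add_le _ _).lt_of_ne fun heq => htt' ?_
  obtain ⟨r, -, hr⟩ := hN.eq_smul_of_add_eq _ _ (smul_ne_zero ha.ne' (hline t))
    (smul_ne_zero hb.ne' (hline t')) heq
  obtain ⟨h₁, h₂⟩ := LinearIndependent.pair_iff.1 hvx (b * t' - r * a * t) (b - r * a)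
    (by rw [sub_smul, sub_smul, ← sub_eq_zero.2 hr]; module)
  rw [← sub_eq_zero.1 h₂] at h₁
  exact (mul_left_cancel₀ hb.ne' (sub_eq_zero.1 h₁)).symm

lemma tendsto_line_cocompact (hN : IsStrictConvexNorm N) {v : E} (hv : v ≠ 0) (x : E) :
    Tendsto (fun t : ℝ => N (x + t • v)) (cocompact ℝ) atTop := by
  have hlow : ∀ t : ℝ, ‖t‖ * N v - N x ≤ N (x + t • v) := fun t => by
    have := hN.add_le (x + t • v) (-x)
    rw [add_neg_cancel_comm, hN.smul, hN.map_neg] at this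
    rw [Real.norm_eq_abs]; linarith
  refine tendsto_atTop_mono hlow (tendsto_atTop_add_const_right _ _ ?_)
  exact tendsto_norm_cocompact_atTop.atTop_mul_const (hN.pos hv)

lemma exists_forall_le_add_smul (hN : IsStrictConvexNorm N) {v w : E}
    (hvw : LinearIndependent ℝ ![v, w]) :
    ∃ d, LinearIndependent ℝ ![v, d] ∧ ∀ t : ℝ, N d ≤ N (d + t • v) := by
  have hv : v ≠ 0 := hvw.ne_zero 0
  have hcont : Continuous fun t : ℝ => N (w + t • v) := continuousOn_univ.1 <|
    (hN.strictConvexOn_line hvw).convexOn.continuousOn isOpen_univ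
  obtain ⟨t₀, ht₀⟩ := hcont.exists_forall_le (hN.tendsto_line_cocompact hv w)
  refine ⟨w + t₀ • v, LinearIndependent.pair_iff.2 fun s t h => ?_, fun t => ?_⟩
  · obtain ⟨h₁, rfl⟩ := LinearIndependent.pair_iff.1 hvw (s + t * t₀) t (by rw [← h]; module)
    exact ⟨by simpa using h₁, rfl⟩
  · simpa [add_assoc, ← add_smul] using ht₀ (t₀ + t)

lemma lt_add_smul_of_forall_le (hN : IsStrictConvexNorm N) {v d : E}
    (hvd : LinearIndependent ℝ ![v, d]) (hd : ∀ t : ℝ, N d ≤ N (d + t • v)) (s : ℝ) {t : ℝ}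
    (ht : 0 ≤ t) : N (s • d + t • v) < N (s • d + (t + 1) • v) := by
  rcases eq_or_ne s 0 with rfl | hs
  · simp only [zero_smul, zero_add, hN.smul]
    rw [abs_of_nonneg ht, abs_of_nonneg (by linarith)]
    linarith [hN.pos (by simpa using hvd.ne_zero 0 : v ≠ 0)]
  have hmin : ∀ t : ℝ, N (s • d + (0 : ℝ) • v) ≤ N (s • d + t • v) := fun t => by
    have hscale : s • d + t • v = s • (d + (t / s) • v) := by
      rw [smul_add, smul_smul, mul_div_cancel₀ _ hs]
    rw [zero_smul, add_zero, hscale, hN.smul, hN.smul]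
    exact mul_le_mul_of_nonneg_left (hd _) (abs_nonneg s)
  have hvsd : LinearIndependent ℝ ![v, s • d] := LinearIndependent.pair_iff.2 fun a b h => by
    obtain ⟨ha, hb⟩ := LinearIndependent.pair_iff.1 hvd a (b * s) (by rw [← h]; module)
    exact ⟨ha, (mul_eq_zero.1 hb).resolve_right hs⟩
  exact (hN.strictConvexOn_line hvsd).strictMonoOn_Ici_of_forall_le hmin ht
    (by simp only [mem_Ici]; linarith) (lt_add_one t)

lemma exists_dual_forall_lt_add (hN : IsStrictConvexNorm N) (hE : finrank ℝ E = 2) {v : E}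
    (hv : v ≠ 0) : ∃ φ : Module.Dual ℝ E, ∀ u, 0 ≤ φ u → N u < N (u + v) := by
  obtain ⟨w, hvw⟩ := exists_linearIndependent_pair_of_one_lt_finrank (hE ▸ one_lt_two) hv
  obtain ⟨d, hvd, hd⟩ := hN.exists_forall_le_add_smul hvw
  let b := basisOfLinearIndependentOfCardEqFinrank hvd (by simp [hE])
  refine ⟨b.coord 0, fun u hu => ?_⟩
  have hdecomp : u = b.repr u 1 • d + b.repr u 0 • v := by
    conv_lhs => rw [← b.sum_repr u]
    simp [b, Fin.sum_univ_two, add_comm]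
  rw [b.coord_apply] at hu
  have hlt := hN.lt_add_smul_of_forall_le hvd hd (b.repr u 1) hu
  rwa [add_smul, one_smul, ← add_assoc, ← hdecomp] at hlt

end IsStrictConvexNorm

lemma Module.Dual.apply_prod (φ : Module.Dual ℝ (ℝ × ℝ)) (u : ℝ × ℝ) :
    φ u = u.1 * φ (1, 0) + u.2 * φ (0, 1) := by
  conv_lhs => rw [show u = u.1 • (1, 0) + u.2 • (0, 1) by ext <;> simp]
  rw [map_add, map_smul, map_smul, smul_eq_mul, smul_eq_mul]

lemma sub_eq_sub_zero_of_forall_succ_sub_eq {G : Type*} [AddCommGroup G] {f g : ℤ → G}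
    (h : ∀ n, f (n + 1) - f n = g (n + 1) - g n) (n : ℤ) : f n - g n = f 0 - g 0 := by
  have hper : Function.Periodic (fun n => f n - g n) 1 := fun n =>
    sub_eq_sub_iff_sub_eq_sub.2 (h n)
  simpa using hper.int_mul n 0

theorem stmt15_general (N : ℝ × ℝ → ℝ)
    (hN0 : ∀ p, N p = 0 ↔ p = 0)
    (hNsmul : ∀ (r : ℝ) (p), N (r • p) = |r| * N p)
    (hNadd : ∀ p q, N (p + q) ≤ N p + N q)
    (hstrict : ∀ p q, p ≠ 0 → q ≠ 0 → N (p + q) = N p + N q → ∃ r > (0:ℝ), q = r • p)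
    (CX : Set (ℝ × ℝ))
    (τ : ℝ × ℝ → ℝ × ℝ)
    (hiso : ∀ u ∈ CX, ∀ v ∈ CX, N (τ u - τ v) = N (u - v))
    (hlines : ∀ u ∈ CX, ∀ v ∈ CX, (u.1 = v.1 ∨ u.2 = v.2) → τ u - τ v = u - v)
    (a b : ℝ × ℝ)
    (A B : ℤ → ℝ × ℝ) (hA0 : A 0 = a) (hB0 : B 0 = b)
    (hA : ∀ n : ℤ, A n ∈ CX ∧ ((A (n+1)).1 = (A n).1 ∨ (A (n+1)).2 = (A n).2))
    (hB : ∀ n : ℤ, B n ∈ CX ∧ ((B (n+1)).1 = (B n).1 ∨ (B (n+1)).2 = (B n).2))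
    (i1 i2 i3 i4 j1 j2 j3 j4 : ℤ)
    (hq1 : 0 < (A i1 - B j1).1 ∧ 0 < (A i1 - B j1).2)
    (hq2 : (A i2 - B j2).1 < 0 ∧ 0 < (A i2 - B j2).2)
    (hq3 : (A i3 - B j3).1 < 0 ∧ (A i3 - B j3).2 < 0)
    (hq4 : 0 < (A i4 - B j4).1 ∧ (A i4 - B j4).2 < 0) :
    τ a - τ b = a - b := by
  have hN : IsStrictConvexNorm N := ⟨hN0, hNsmul, hNadd, hstrict⟩
  have hdriftA := sub_eq_sub_zero_of_forall_succ_sub_eq (f := fun n => τ (A n)) fun n =>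
    hlines _ (hA (n + 1)).1 _ (hA n).1 (hA n).2
  have hdriftB := sub_eq_sub_zero_of_forall_succ_sub_eq (f := fun n => τ (B n)) fun n =>
    hlines _ (hB (n + 1)).1 _ (hB n).1 (hB n).2
  have hτ : ∀ i j, τ (A i) - τ (B j) = A i - B j + (τ a - τ b - (a - b)) := fun i j => by
    have hAi := hdriftA i
    have hBj := hdriftB j
    rw [hA0] at hAi
    rw [hB0] at hBj
    rw [← sub_add_cancel (τ (A i)) (A i), ← sub_add_cancel (τ (B j)) (B j), hAi, hBj]
    abel
  by_contra hne
  obtain ⟨φ, hφ⟩ := hN.exists_dual_forall_lt_add (by simp) (sub_ne_zero.2 hne)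
  have hneg : ∀ i j, (A i - B j).1 * φ (1, 0) + (A i - B j).2 * φ (0, 1) < 0 := fun i j => by
    rw [← φ.apply_prod]
    by_contra! hnn
    have := hiso _ (hA i).1 _ (hB j).1
    rw [hτ] at this
    exact (hφ _ hnn).ne' this
  rcases le_or_gt 0 (φ (1, 0)) with h₁ | h₁ <;> rcases le_or_gt 0 (φ (0, 1)) with h₂ | h₂
  · nlinarith [hneg i1 j1]
  · nlinarith [hneg i4 j4]
  · nlinarith [hneg i2 j2]
  · nlinarith [hneg i3 j3]

/-- Claim `4Q`. Let `N` be a strictly convex norm on `ℝ²` and let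
`τ : C_X → C_X` be a surjective self-isometry of a convex Jordan curve `C_X ⊆ ℝ²`
satisfying `τ a - τ b = a - b` whenever `a, b ∈ C_X` lie on a common horizontal or
vertical line. Let `A, B : ℤ → ℝ²` be orbits of `a` and `b` under the process of
reflecting along coordinate lines of `C_X`. If there are indices `i₁,…,i₄`, `j₁,…,j₄`
with `A iₖ - B jₖ` in the open `k`-th quadrant for `k = 1, 2, 3, 4`, then
`τ a - τ b = a - b`. -/
theorem stmt15 (N : ℝ × ℝ → ℝ)
    (hN0 : ∀ p, N p = 0 ↔ p = 0)
    (hNneg : ∀ p, N (-p) = N p)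
    (hNsmul : ∀ (r : ℝ) (p), N (r • p) = |r| * N p)
    (hNadd : ∀ p q, N (p + q) ≤ N p + N q)
    (hstrict : ∀ p q, p ≠ 0 → q ≠ 0 → N (p + q) = N p + N q → ∃ r > (0:ℝ), q = r • p)
    (CX : Set (ℝ × ℝ))
    (hJordan : ∃ K : Set (ℝ × ℝ), IsCompact K ∧ Convex ℝ K ∧
      (interior K).Nonempty ∧ CX = frontier K)
    (τ : ℝ × ℝ → ℝ × ℝ)
    (hmap : Set.MapsTo τ CX CX) (hsurj : Set.SurjOn τ CX CX)
    (hiso : ∀ u ∈ CX, ∀ v ∈ CX, N (τ u - τ v) = N (u - v))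
    (hlines : ∀ u ∈ CX, ∀ v ∈ CX, (u.1 = v.1 ∨ u.2 = v.2) → τ u - τ v = u - v)
    (a b : ℝ × ℝ) (ha : a ∈ CX) (hb : b ∈ CX)
    (A B : ℤ → ℝ × ℝ) (hA0 : A 0 = a) (hB0 : B 0 = b)
    (hA : ∀ n : ℤ, A n ∈ CX ∧ ((A (n+1)).1 = (A n).1 ∨ (A (n+1)).2 = (A n).2))
    (hB : ∀ n : ℤ, B n ∈ CX ∧ ((B (n+1)).1 = (B n).1 ∨ (B (n+1)).2 = (B n).2))
    (i1 i2 i3 i4 j1 j2 j3 j4 : ℤ)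
    (hq1 : 0 < (A i1 - B j1).1 ∧ 0 < (A i1 - B j1).2)
    (hq2 : (A i2 - B j2).1 < 0 ∧ 0 < (A i2 - B j2).2)
    (hq3 : (A i3 - B j3).1 < 0 ∧ (A i3 - B j3).2 < 0)
    (hq4 : 0 < (A i4 - B j4).1 ∧ (A i4 - B j4).2 < 0) :
    τ a - τ b = a - b :=
  stmt15_general N hN0 hNsmul hNadd hstrict CX τ hiso hlines a b A B hA0 hB0 hA hB i1 i2 i3 i4 j1 j2
    j3 j4 hq1 hq2 hq3 hq4
end

section
/- Let f be a convex real-valued function on an open convex set A ⊂ ℝ^d. If f has all partial derivatives at each point of A, then f is continuously differentiable on A (f ∈ C¹(A)). -/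
/-!
Subtracting the linear map `L` with the given partial derivatives leaves a convex `g` whose
partial derivatives at `x` vanish. Writing `w = ∑ᵢ wᵢ bᵢ` as the average of the `n` points
`n wᵢ bᵢ`, Jensen bounds `g (x + w) - g x` above by `o(‖w‖)`, and midpoint convexity
`g (x + w) + g (x - w) ≥ 2 g x` turns this into a two-sided bound, so `L` is the derivative.

For continuity of the derivative, the subgradient inequalities at `x` and at `y` bound
`(f' y - f' x) z` by the Taylor remainder of `f` at `x` in direction `y + z - x`; for
`‖y - x‖ < ‖z‖` this is `o(‖z‖)`, which bounds `‖f' y - f' x‖` by a shell argument.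
-/

open Filter Set Metric Topology Asymptotics

variable {E : Type*} [NormedAddCommGroup E] [NormedSpace ℝ E] {A : Set E} {f : E → ℝ}
  {x y z : E} {L L' : E →L[ℝ] ℝ}

namespace ConvexOn

theorem le_sub_of_hasFDerivAt (hf : ConvexOn ℝ A f) (hx : x ∈ A) (hy : y ∈ A)
    (hL : HasFDerivAt f L x) : L (y - x) ≤ f y - f x := by
  set γ : ℝ →ᵃ[ℝ] E := AffineMap.lineMap x y
  have hline : ConvexOn ℝ (γ ⁻¹' A) (f ∘ γ) := hf.comp_affineMap γ
  have hderiv : HasDerivAt (f ∘ γ) (L (y - x)) 0 :=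
    (by simpa [γ] using hL : HasFDerivAt f L (γ 0)).comp_hasDerivAt _
      AffineMap.hasDerivAt_lineMap
  simpa [γ, slope_def_field] using
    hline.le_slope_of_hasDerivAt (by simpa [γ]) (by simpa [γ]) zero_lt_one hderiv

theorem two_mul_le_add (hf : ConvexOn ℝ A f) (h₁ : x + z ∈ A) (h₂ : x - z ∈ A) :
    2 * f x ≤ f (x + z) + f (x - z) := by
  have hmid : (1 / 2 : ℝ) • (x + z) + (1 / 2 : ℝ) • (x - z) = x := by module
  have := hf.2 h₁ h₂ (by norm_num : (0 : ℝ) ≤ 1 / 2) (by norm_num : (0 : ℝ) ≤ 1 / 2) (by norm_num)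
  rw [hmid, smul_eq_mul, smul_eq_mul] at this
  linarith

theorem hasFDerivAt_zero_of_eventually_le (hf : ConvexOn ℝ A f) (hA : A ∈ 𝓝 x) {h : E → ℝ}
    (hh : h =o[𝓝 0] id) (hle : ∀ᶠ z in 𝓝 0, f (x + z) - f x ≤ h z) :
    HasFDerivAt f (0 : E →L[ℝ] ℝ) x := by
  have hxz : ∀ᶠ z in 𝓝 (0 : E), x + z ∈ A :=
    (continuous_const.add continuous_id).tendsto' 0 x (add_zero x) hA
  have hxz' : ∀ᶠ z in 𝓝 (0 : E), x - z ∈ A :=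
    (continuous_const.sub continuous_id).tendsto' 0 x (sub_zero x) hA
  have hh_neg : (fun z => h (-z)) =o[𝓝 0] id :=
    (hh.comp_tendsto (continuous_neg.tendsto' 0 0 neg_zero)).trans_le fun z => by simp
  rw [hasFDerivAt_iff_isLittleO_nhds_zero]
  refine (IsBigO.of_norm_eventuallyLE ?_).trans_isLittleO (hh.norm_left.add hh_neg.norm_left)
  have hle_neg : ∀ᶠ z in 𝓝 (0 : E), f (x - z) - f x ≤ h (-z) := by
    simpa [sub_eq_add_neg] using
      (continuous_neg.tendsto' 0 0 neg_zero).eventually hle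
  filter_upwards [hxz, hxz', hle, hle_neg] with z h₁ h₂ hz hz_neg
  have hconv := hf.two_mul_le_add h₁ h₂
  simp only [zero_apply, sub_zero, Real.norm_eq_abs]
  rw [abs_le]
  constructor <;> linarith [le_abs_self (h z), le_abs_self (h (-z)), abs_nonneg (h z),
    abs_nonneg (h (-z))]

theorem sub_le_inv_card_mul_sum_basis (hf : ConvexOn ℝ A f) {ι : Type*} [Fintype ι]
    [Nonempty ι] (b : Module.Basis ι ℝ E)
    (hA : ∀ i, x + (Fintype.card ι * b.repr z i) • b i ∈ A) :
    f (x + z) - f x ≤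
      (Fintype.card ι : ℝ)⁻¹ * ∑ i, (f (x + (Fintype.card ι * b.repr z i) • b i) - f x) := by
  have hn : (Fintype.card ι : ℝ) ≠ 0 := by positivity
  have hz : x + z = ∑ i, (Fintype.card ι : ℝ)⁻¹ • (x + (Fintype.card ι * b.repr z i) • b i) := by
    simp only [smul_add, Finset.sum_add_distrib, smul_smul, Finset.sum_const, Finset.card_univ,
      ← Nat.cast_smul_eq_nsmul ℝ, inv_mul_cancel_left₀ hn, mul_inv_cancel₀ hn, one_smul,
      b.sum_repr]
  have hjensen := hf.map_sum_le (t := Finset.univ) (w := fun _ => (Fintype.card ι : ℝ)⁻¹)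
    (fun _ _ => by positivity) (by simp [hn]) (fun i _ => hA i)
  rw [← hz] at hjensen
  simp only [smul_eq_mul, ← Finset.mul_sum] at hjensen
  rw [Finset.sum_sub_distrib, mul_sub, Finset.sum_const, Finset.card_univ, nsmul_eq_mul,
    inv_mul_cancel_left₀ hn]
  linarith

theorem hasFDerivAt_zero_of_hasDerivAt_basis (hf : ConvexOn ℝ A f) (hA : A ∈ 𝓝 x)
    {ι : Type*} [Fintype ι] (b : Module.Basis ι ℝ E)
    (hb : ∀ i, HasDerivAt (fun t : ℝ => f (x + t • b i)) 0 0) :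
    HasFDerivAt f (0 : E →L[ℝ] ℝ) x := by
  rcases subsingleton_or_nontrivial E with _ | _
  · exact hasFDerivAt_of_subsingleton f x
  have := b.index_nonempty
  have := Module.Finite.of_basis b
  set n : ℝ := (Fintype.card ι : ℝ)
  let ℓ (i : ι) : E →L[ℝ] ℝ := n • LinearMap.toContinuousLinearMap (b.coord i)
  have hℓ : ∀ i z, ℓ i z = n * b.repr z i := fun i z => rfl
  have hφ : ∀ i, (fun t : ℝ => f (x + t • b i) - f x) =o[𝓝 0] (fun t => t) := fun i => by
    simpa using (hasDerivAt_iff_isLittleO_nhds_zero.1 (hb i))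
  refine hf.hasFDerivAt_zero_of_eventually_le hA
    (h := fun z => n⁻¹ * ∑ i, (f (x + ℓ i z • b i) - f x)) ?_ ?_
  · refine IsLittleO.const_mul_left (IsLittleO.fun_sum fun i _ => ?_) _
    exact ((hφ i).comp_tendsto ((ℓ i).continuous.tendsto' 0 0 (map_zero _))).trans_isBigO
      ((ℓ i).isBigO_id _)
  · have hmem : ∀ i, ∀ᶠ z in 𝓝 (0 : E), x + ℓ i z • b i ∈ A := fun i =>
      ((continuous_const.add ((ℓ i).continuous.smul continuous_const)).tendsto' 0 x
        (by simp)) hA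
    filter_upwards [eventually_all.2 hmem] with z hz
    simp only [hℓ] at hz ⊢
    exact hf.sub_le_inv_card_mul_sum_basis b hz

theorem hasFDerivAt_of_hasDerivAt_basis (hf : ConvexOn ℝ A f) (hA : A ∈ 𝓝 x)
    {ι : Type*} [Fintype ι] (b : Module.Basis ι ℝ E)
    (hb : ∀ i, HasDerivAt (fun t : ℝ => f (x + t • b i)) (L (b i)) 0) : HasFDerivAt f L x := by
  have hfL : ConvexOn ℝ A (f - ⇑L) := hf.sub ((L : E →ₗ[ℝ] ℝ).concaveOn hf.1)
  have hline : ∀ i, HasDerivAt (fun t : ℝ => L (x + t • b i)) (L (b i)) 0 := fun i => by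
    have := L.hasFDerivAt.comp_hasDerivAt (0 : ℝ)
      (((hasDerivAt_id (0 : ℝ)).smul_const (b i)).const_add x)
    rwa [one_smul] at this
  have hpartial : ∀ i, HasDerivAt (fun t : ℝ => (f - ⇑L) (x + t • b i)) 0 0 := fun i => by
    have := (hb i).sub (hline i)
    rwa [sub_self] at this
  simpa using (hfL.hasFDerivAt_zero_of_hasDerivAt_basis hA b hpartial).add L.hasFDerivAt

theorem differentiableAt_of_hasDerivAt_basis (hf : ConvexOn ℝ A f) (hA : A ∈ 𝓝 x)
    {ι : Type*} [Fintype ι] (b : Module.Basis ι ℝ E)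
    (hb : ∀ i, ∃ c, HasDerivAt (fun t : ℝ => f (x + t • b i)) c 0) : DifferentiableAt ℝ f x := by
  choose c hc using hb
  have := Module.Finite.of_basis b
  refine (hf.hasFDerivAt_of_hasDerivAt_basis hA b
    (L := LinearMap.toContinuousLinearMap (b.constr ℝ c)) fun i => ?_).differentiableAt
  simpa only [LinearMap.coe_toContinuousLinearMap', b.constr_basis] using hc i

theorem fderiv_sub_apply_le (hf : ConvexOn ℝ A f) (hx : x ∈ A) (hy : y ∈ A) (hyz : y + z ∈ A)
    (hL : HasFDerivAt f L x) (hL' : HasFDerivAt f L' y) :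
    L' z - L z ≤ f (y + z) - f x - L (y + z - x) := by
  have hy_sub := hf.le_sub_of_hasFDerivAt hx hy hL
  have hyz_sub := hf.le_sub_of_hasFDerivAt hy hyz hL'
  rw [add_sub_cancel_left] at hyz_sub
  have hsplit : L (y + z - x) = L (y - x) + L z := by rw [← map_add]; congr 1; abel
  linarith

theorem norm_sub_le_of_hasFDerivAt (hf : ConvexOn ℝ A f) (hx : x ∈ A) (hL : HasFDerivAt f L x)
    (hL' : HasFDerivAt f L' y) {ρ ε : ℝ} (hρ : 0 < ρ) (hε : 0 ≤ ε)
    (hball : ball x (3 * ρ) ⊆ A) (hrem : ∀ w, ‖w‖ < 3 * ρ → f (x + w) - f x - L w ≤ ε * ‖w‖)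
    (hy : ‖y - x‖ < ρ) : ‖L' - L‖ ≤ 2 * ε := by
  have hyA : y ∈ A := hball (by rw [mem_ball, dist_eq_norm]; linarith)
  have hshell : ∀ z, ρ ≤ ‖z‖ → ‖z‖ < 2 * ρ → L' z - L z ≤ 2 * ε * ‖z‖ := by
    intro z hz₁ hz₂
    have hyzx : ‖y + z - x‖ ≤ ‖y - x‖ + ‖z‖ := by
      rw [add_sub_right_comm]; exact norm_add_le _ _
    have hyz : y + z ∈ A := hball (by rw [mem_ball, dist_eq_norm]; linarith)
    calc L' z - L z ≤ f (x + (y + z - x)) - f x - L (y + z - x) := by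
          rw [add_sub_cancel]; exact hf.fderiv_sub_apply_le hx hyA hyz hL hL'
      _ ≤ ε * ‖y + z - x‖ := hrem _ (by linarith)
      _ ≤ 2 * ε * ‖z‖ := by nlinarith
  refine ContinuousLinearMap.opNorm_le_of_shell (ε := 2 * ρ) (c := (2 : ℝ)) (by positivity)
    (by positivity) (by norm_num) fun z hz₁ hz₂ => ?_
  rw [Real.norm_two, mul_div_cancel_left₀ _ two_ne_zero] at hz₁
  have hz := hshell z hz₁ hz₂
  have hz_neg := hshell (-z) (by rwa [norm_neg]) (by rwa [norm_neg])
  rw [map_neg, map_neg, norm_neg] at hz_neg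
  rw [sub_apply, Real.norm_eq_abs, abs_le]
  constructor <;> linarith

theorem continuousOn_fderiv (hA : IsOpen A) (hf : ConvexOn ℝ A f)
    (hd : DifferentiableOn ℝ f A) : ContinuousOn (fderiv ℝ f) A := by
  have hfd : ∀ y ∈ A, HasFDerivAt f (fderiv ℝ f y) y := fun y hy =>
    (hd.differentiableAt (hA.mem_nhds hy)).hasFDerivAt
  intro x hx
  refine (Metric.continuousAt_iff.2 fun ε hε => ?_).continuousWithinAt
  obtain ⟨R, hR, hRA⟩ := Metric.isOpen_iff.1 hA x hx
  obtain ⟨δ, hδ, hrem⟩ := Metric.eventually_nhds_iff.1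
    ((hasFDerivAt_iff_isLittleO_nhds_zero.1 (hfd x hx)).def (by positivity : 0 < ε / 4))
  set ρ := min δ R / 3
  have hρ : 0 < ρ := by positivity
  have h3ρ : 3 * ρ = min δ R := by ring
  have hball : ball x (3 * ρ) ⊆ A :=
    (ball_subset_ball (by linarith [min_le_right δ R])).trans hRA
  refine ⟨ρ, hρ, fun y hy => ?_⟩
  rw [dist_eq_norm] at hy ⊢
  have hyA : y ∈ A := hball (by rw [mem_ball, dist_eq_norm]; linarith)
  have hbound := hf.norm_sub_le_of_hasFDerivAt hx (hfd x hx) (hfd y hyA) hρ (by positivity)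
    hball (fun w hw => (le_abs_self _).trans (hrem (by
      rw [dist_zero_right]; linarith [min_le_left δ R]))) hy
  linarith

end ConvexOn

theorem stmt18_general {d : ℕ} (A : Set (EuclideanSpace ℝ (Fin d))) (f : EuclideanSpace ℝ (Fin d) → ℝ)
    (hA : IsOpen A) (hf : ConvexOn ℝ A f)
    (hpartial : ∀ x ∈ A, ∀ i : Fin d, ∃ c : ℝ,
      HasDerivAt (fun t : ℝ => f (x + t • EuclideanSpace.single i 1)) c 0) :
    ContDiffOn ℝ 1 f A := by
  have hdiff : DifferentiableOn ℝ f A := fun x hx =>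
    (hf.differentiableAt_of_hasDerivAt_basis (hA.mem_nhds hx)
      (EuclideanSpace.basisFun (Fin d) ℝ).toBasis
      (by simpa using hpartial x hx)).differentiableWithinAt
  rw [← zero_add 1, contDiffOn_succ_iff_fderiv_of_isOpen hA, contDiffOn_zero]
  exact ⟨hdiff, by simp, hf.continuousOn_fderiv hA hdiff⟩

/-- Rockafellar, Theorem 25.2 + Corollary 25.5.1. Let `f` be a
convex real-valued function on an open convex set `A ⊆ ℝ^d`. If `f` has all `d` partial
derivatives at each point of `A`, then `f` is continuously differentiable on `A`. -/
theorem stmt18 {d : ℕ} (A : Set (EuclideanSpace ℝ (Fin d))) (f : EuclideanSpace ℝ (Fin d) → ℝ)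
    (hA : IsOpen A) (hAconv : Convex ℝ A) (hf : ConvexOn ℝ A f)
    (hpartial : ∀ x ∈ A, ∀ i : Fin d, ∃ c : ℝ,
      HasDerivAt (fun t : ℝ => f (x + t • EuclideanSpace.single i 1)) c 0) :
    ContDiffOn ℝ 1 f A :=
  stmt18_general A f hA hf hpartial
end

section
/- Let X be a strictly convex normed plane and v ∈ X, v ≠ 0. Then there exists a closed half-plane H (namely H = {αv + βw : α ≤ 0, β ∈ ℝ}, where w is a unit vector Birkhoff-orthogonal to v, w ⊥_B v) such that ‖u − v‖ > ‖u‖ for every u ∈ H. -/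
/-- Let `X` be a strictly convex normed plane and `v ≠ 0`. Then
there is a unit vector `w` Birkhoff-orthogonal to `v` such that on the closed
half-plane `H = {α • v + β • w : α ≤ 0, β ∈ ℝ}` one has `‖u - v‖ > ‖u‖` for every
`u ∈ H`. -/
theorem stmt19 {X : Type*} [NormedAddCommGroup X] [NormedSpace ℝ X]
    [StrictConvexSpace ℝ X] (hdim : Module.finrank ℝ X = 2)
    (v : X) (hv : v ≠ 0) :
    ∃ w : X, ‖w‖ = 1 ∧ (∀ l : ℝ, ‖w + l • v‖ ≥ ‖w‖) ∧
      ∀ α β : ℝ, α ≤ 0 → ‖(α • v + β • w) - v‖ > ‖α • v + β • w‖ := by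
  have hfd : FiniteDimensional ℝ X := FiniteDimensional.of_finrank_eq_succ hdim
  -- a vector outside the span of v
  have hspan : Submodule.span ℝ {v} ≠ ⊤ := by
    intro h
    have h1 : Module.finrank ℝ (Submodule.span ℝ ({v} : Set X)) = 1 :=
      finrank_span_singleton hv
    rw [h, finrank_top] at h1
    rw [hdim] at h1
    omega
  obtain ⟨u, hu⟩ : ∃ u, u ∉ Submodule.span ℝ ({v} : Set X) := by
    by_contra h
    push_neg at h
    exact hspan (Submodule.eq_top_iff'.mpr h)
  have hu0 : u ≠ 0 := fun h => hu (h ▸ Submodule.zero_mem _)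
  have li : LinearIndependent ℝ ![u, v] := by
    rw [linearIndependent_fin2]
    refine ⟨by simpa using hv, fun a ha => hu ?_⟩
    simp only [Matrix.cons_val_one, Matrix.head_cons, Matrix.cons_val_zero] at ha
    exact Submodule.mem_span_singleton.mpr ⟨a, ha⟩
  let b := basisOfLinearIndependentOfCardEqFinrank li (by simp [hdim])
  have hb : ⇑b = ![u, v] := coe_basisOfLinearIndependentOfCardEqFinrank li _
  let φ₀ : X →ₗ[ℝ] ℝ := b.coord 0
  have hφv : φ₀ v = 0 := by
    have : v = b 1 := by rw [hb]; rfl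
    simp [φ₀, this, Module.Basis.coord_apply, Module.Basis.repr_self]
  have hφu : φ₀ u = 1 := by
    have : u = b 0 := by rw [hb]; rfl
    simp [φ₀, this, Module.Basis.coord_apply, Module.Basis.repr_self]
  let φ : X →L[ℝ] ℝ := LinearMap.toContinuousLinearMap φ₀
  -- maximize φ on the unit sphere
  have hsne : (Metric.sphere (0 : X) 1).Nonempty := by
    refine ⟨‖v‖⁻¹ • v, ?_⟩
    simp [norm_smul, abs_of_nonneg (inv_nonneg.mpr (norm_nonneg v)),
      inv_mul_cancel₀ (norm_ne_zero_iff.mpr hv)]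
  obtain ⟨w, hw, hmax⟩ := (isCompact_sphere (0 : X) 1).exists_isMaxOn hsne
    φ.continuous.continuousOn
  have hwnorm : ‖w‖ = 1 := by simpa using hw
  have hmax' : ∀ x : X, ‖x‖ = 1 → φ x ≤ φ w := fun x hx =>
    hmax (by simpa using hx)
  have hφw : 0 < φ w := by
    have h1 : φ (‖u‖⁻¹ • u) ≤ φ w := hmax' _ (by
      simp [norm_smul, abs_of_nonneg (inv_nonneg.mpr (norm_nonneg u)),
        inv_mul_cancel₀ (norm_ne_zero_iff.mpr hu0)])
    have h2 : φ (‖u‖⁻¹ • u) = ‖u‖⁻¹ := by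
      simp [φ, hφu]
    have : (0:ℝ) < ‖u‖⁻¹ := inv_pos.mpr (norm_pos_iff.mpr hu0)
    linarith [h2 ▸ h1]
  -- main bound: φ x ≤ φ w * ‖x‖ for all x
  have hbound : ∀ x : X, φ x ≤ φ w * ‖x‖ := by
    intro x
    rcases eq_or_ne x 0 with rfl | hx
    · simp
    · have h1 : φ (‖x‖⁻¹ • x) ≤ φ w := hmax' _ (by
        simp [norm_smul, abs_of_nonneg (inv_nonneg.mpr (norm_nonneg x)),
          inv_mul_cancel₀ (norm_ne_zero_iff.mpr hx)])
      have h2 : φ (‖x‖⁻¹ • x) = ‖x‖⁻¹ * φ x := by simp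
      have hxpos : (0:ℝ) < ‖x‖ := norm_pos_iff.mpr hx
      rw [h2] at h1
      calc φ x = ‖x‖ * (‖x‖⁻¹ * φ x) := by field_simp
        _ ≤ ‖x‖ * φ w := by
            exact mul_le_mul_of_nonneg_left h1 hxpos.le
        _ = φ w * ‖x‖ := mul_comm _ _
  -- Birkhoff orthogonality (general scaled form)
  have hB : ∀ β s : ℝ, ‖β • w + s • v‖ ≥ |β| := by
    intro β s
    have h1 : φ (β • w + s • v) = β * φ w := by
      simp [φ, hφv]
    have h2 : β * φ w ≤ φ w * ‖β • w + s • v‖ := h1 ▸ hbound _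
    have h3 : -(β * φ w) ≤ φ w * ‖β • w + s • v‖ := by
      have h4 : φ (-(β • w + s • v)) = -(β * φ w) := by rw [map_neg, h1]
      have := hbound (-(β • w + s • v))
      rw [h4, norm_neg] at this
      exact this
    have h5 : |β * φ w| ≤ φ w * ‖β • w + s • v‖ := abs_le.mpr ⟨by linarith, h2⟩
    rw [abs_mul, abs_of_pos hφw] at h5
    rw [mul_comm (|β|)] at h5
    exact (mul_le_mul_iff_right₀ hφw).mp h5
  -- strict version, using strict convexity
  have hBs : ∀ β s : ℝ, β ≠ 0 → s ≠ 0 → ‖β • w + s • v‖ > |β| := by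
    intro β s hβ hs
    rcases lt_or_eq_of_le (hB β s) with h | h
    · exact h
    have hnx : ‖β • w‖ = |β| := by
      rw [norm_smul, hwnorm, mul_one]; rfl
    have hadd : ‖(β • w + s • v) + β • w‖ = ‖β • w + s • v‖ + ‖β • w‖ := by
      have e : (β • w + s • v) + β • w = (2*β) • w + s • v := by module
      have h1 : ‖(2*β) • w + s • v‖ ≥ |2*β| := hB _ _
      have h2 : |2*β| = 2 * |β| := by rw [abs_mul]; norm_num
      have h3 : ‖(β • w + s • v) + β • w‖ ≤ ‖β • w + s • v‖ + ‖β • w‖ :=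
        norm_add_le _ _
      rw [← h, hnx, e] at h3 ⊢
      linarith [h2 ▸ h1]
    have heq : β • w + s • v = β • w :=
      eq_of_norm_eq_of_norm_add_eq (by rw [hnx, ← h]) hadd
    have : s • v = 0 := by
      have := sub_eq_zero.mpr heq
      simpa using this
    rcases smul_eq_zero.mp this with h' | h'
    · exact absurd h' hs
    · exact absurd h' hv
  refine ⟨w, hwnorm, ?_, ?_⟩
  · intro l
    have := hB 1 l
    simpa [hwnorm] using this
  · intro α β hα
    have e1 : (α • v + β • w) - v = β • w + (α - 1) • v := by module
    have e2 : α • v + β • w = β • w + α • v := by module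
    rw [e1, e2]
    rcases eq_or_ne β 0 with rfl | hβ
    · simp only [zero_smul, zero_add]
      rw [norm_smul, norm_smul]
      have hvpos : (0:ℝ) < ‖v‖ := norm_pos_iff.mpr hv
      have : |α - 1| > |α| := by
        rw [abs_of_nonpos hα, abs_of_nonpos (by linarith : α - 1 ≤ 0)]
        linarith
      exact mul_lt_mul_of_pos_right this hvpos
    rcases eq_or_lt_of_le hα with rfl | hα'
    · rw [show (0:ℝ) - 1 = -1 by norm_num, zero_smul, add_zero,
        show ‖β • w‖ = |β| from by rw [norm_smul, hwnorm, mul_one]; rfl]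
      exact hBs β (-1) hβ (by norm_num)
    · -- α < 0
      by_contra hcon
      push_neg at hcon
      set c := ‖β • w + (α - 1) • v‖ with hc
      set d := ‖β • w + α • v‖ with hd
      have hm : d > |β| := hBs β α hβ (ne_of_lt hα')
      have hα1 : α - 1 < 0 := by linarith
      have hα1' : α - 1 ≠ 0 := ne_of_lt hα1
      have key : β • w + α • v =
          (α/(α-1)) • (β • w + (α - 1) • v) + (-1/(α-1)) • (β • w) := by
        match_scalars <;> · field_simp; try ring
      have hlam : (0:ℝ) ≤ α/(α-1) := div_nonneg_of_nonpos hα'.le hα1.le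
      have hmu : (0:ℝ) < -1/(α-1) := div_pos_of_neg_of_neg (by norm_num) hα1
      have hconv : d ≤ (α/(α-1)) * c + (-1/(α-1)) * |β| := by
        rw [hd, key]
        calc ‖(α/(α-1)) • (β • w + (α - 1) • v) + (-1/(α-1)) • (β • w)‖
            ≤ ‖(α/(α-1)) • (β • w + (α - 1) • v)‖ + ‖(-1/(α-1)) • (β • w)‖ :=
              norm_add_le _ _
          _ = (α/(α-1)) * c + (-1/(α-1)) * |β| := by
              rw [norm_smul, norm_smul, norm_smul, hwnorm, mul_one,
                Real.norm_eq_abs, Real.norm_eq_abs, abs_of_nonneg hlam,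
                abs_of_pos hmu]
              rfl
      have hsum : α/(α-1) + (-1/(α-1)) = 1 := by field_simp; ring
      have h6 : (α/(α-1)) * c <= (α/(α-1)) * d := mul_le_mul_of_nonneg_left hcon hlam
      have h8 : (-1/(α-1)) * |β| < (-1/(α-1)) * d := mul_lt_mul_of_pos_left hm hmu
      have h9 : (α/(α-1)) * d + (-1/(α-1)) * d = d := by rw [<- add_mul, hsum, one_mul]
      linarith
end
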